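/- arXiv:2603.10810 — 8 statements merged into one kernel-verified Lean document; each statement's English description precedes it below -/
import Mathlib

section
/- Let (R, m) be a local ring and let I be an ideal of R with depth(R/I) = 0 that is weakly m-full, i.e., there exists an ideal J of R with I = J : m. Then I is a Burch ideal, meaning m(I : m) ≠ mI. -/
/-!
Since `I = J : m` gives `mI ⊆ J`, an equality `m(I : m) = mI` would force `I : m ⊆ J : m = I`,
contradicting `depth R/I = 0`.
-/

open IsLocalRing

namespace Ideal

variable {R : Type*} [CommSemiring R]

theorem le_colon_iff_mul_le {I J K : Ideal R} : K ≤ J.colon (I : Set R) ↔ I * K ≤ J := by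
  rw [Ideal.mul_le]
  simp only [SetLike.le_def, Submodule.mem_colon, smul_eq_mul]
  exact ⟨fun h r hr s hs => mul_comm s r ▸ h hs r hr, fun h s hs r hr => mul_comm r s ▸ h r hr s hs⟩

theorem colon_colon_eq_of_mul_colon_colon_eq {I J : Ideal R}
    (h : I * (J.colon (I : Set R)).colon I = I * J.colon I) :
    (J.colon (I : Set R)).colon I = J.colon I :=
  le_antisymm (le_colon_iff_mul_le.2 (h ▸ le_colon_iff_mul_le.1 le_rfl)) le_colon

end Ideal

theorem weakly_m_full_is_burch_general {R : Type*} [CommRing R] [IsLocalRing R]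
    (I J : Ideal R)
    (hdepth : Submodule.colon I (maximalIdeal R) ≠ I)
    (hwf : I = Submodule.colon J (maximalIdeal R)) :
    maximalIdeal R * Submodule.colon I (maximalIdeal R) ≠ maximalIdeal R * I := by
  subst hwf
  exact fun h => hdepth (Ideal.colon_colon_eq_of_mul_colon_colon_eq h)

/-- Over a Noetherian local ring `(R, m)`, a weakly `m`-full ideal `I`
(i.e. `I = J : m` for some ideal `J`) which is proper and satisfies `depth R/I = 0`
(i.e. `(I : m) ≠ I`) is a Burch ideal, i.e. `m(I : m) ≠ mI`. -/
theorem weakly_m_full_is_burch {R : Type*} [CommRing R] [IsNoetherianRing R] [IsLocalRing R]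
    (I J : Ideal R) (hIproper : I ≠ ⊤)
    (hdepth : Submodule.colon I (maximalIdeal R) ≠ I)
    (hwf : I = Submodule.colon J (maximalIdeal R)) :
    maximalIdeal R * Submodule.colon I (maximalIdeal R) ≠ maximalIdeal R * I :=
  weakly_m_full_is_burch_general I J hdepth hwf
end

section
/- Let (S, n) be a regular local ring and I a nonzero ideal of S such that R = S/I has depth zero. Then I is a Burch ideal of S if and only if ν(I : n) < r(S/I) + ν(I), where ν denotes minimal number of generators and r denotes the type (dimension of the socle when depth is 0). -/
open IsLocalRing Module

/-- The length of a module, defined as the Krull dimension of its submodule lattice. -/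
noncomputable def mlen (R M : Type*) [CommRing R] [AddCommGroup M] [Module R M] : ℕ∞ :=
  WithBot.unbotD 0 (Order.krullDim (Submodule R M))

/-- The length of the subquotient `A/B` of the ring, for ideals `A`, `B` (used with `B ≤ A`). -/
noncomputable def qlen {R : Type*} [CommRing R] (A B : Ideal R) : ℕ∞ :=
  mlen R (↥A ⧸ Submodule.comap (Submodule.subtype A) B)

/-- A regular local ring: a Noetherian local ring whose maximal ideal can be generated by
`Krull dimension` many elements. -/
def IsRegularLocal (S : Type*) [CommRing S] [IsLocalRing S] : Prop :=
  IsNoetherianRing S ∧ ∃ s : Finset S, Ideal.span (s : Set S) = maximalIdeal S ∧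
    (s.card : WithBot ℕ∞) = ringKrullDim S

lemma mlen_eq_finrank (k V : Type*) [Field k] [AddCommGroup V] [Module k V]
    [FiniteDimensional k V] : mlen k V = (finrank k V : ℕ∞) := by
  have hub : ∀ p : LTSeries (Submodule k V), p.length ≤ finrank k V := by
    intro p
    have key : ∀ i : Fin (p.length + 1), (i : ℕ) ≤ finrank k (p.toFun i) := by
      intro i
      induction i using Fin.induction with
      | zero => simp
      | succ j ih =>
        have hlt := Submodule.finrank_lt_finrank_of_lt (p.step j)
        have := ih.trans_lt hlt
        simpa using this
    exact (key (Fin.last _)).trans (Submodule.finrank_le _)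
  have hlb : ∃ p : LTSeries (Submodule k V), p.length = finrank k V := by
    refine ⟨⟨finrank k V,
      fun i => Submodule.span k ((Module.finBasis k V) '' {j | (j : ℕ) < (i : ℕ)}), ?_⟩, rfl⟩
    intro i
    refine lt_of_le_of_ne (Submodule.span_mono (Set.image_mono ?_)) ?_
    · intro j hj
      simp only [Set.mem_setOf_eq, Fin.coe_castSucc, Fin.val_succ] at *
      omega
    · intro h
      have hb : (Module.finBasis k V) i ∈
          Submodule.span k ((Module.finBasis k V) '' {j | (j : ℕ) < ((i.succ : Fin _) : ℕ)}) :=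
        Submodule.subset_span ⟨i, by simp, rfl⟩
      rw [show Submodule.span k ((Module.finBasis k V) '' {j | (j : ℕ) < ((i.succ : Fin _) : ℕ)}) = Submodule.span k ((Module.finBasis k V) '' {j | (j : ℕ) < ((i.castSucc : Fin _) : ℕ)}) from h.symm] at hb
      exact (Module.finBasis k V).linearIndependent.notMem_span_image (by simp) hb
  obtain ⟨p, hp⟩ := hlb
  have h1 : Order.krullDim (Submodule k V) ≤ ((finrank k V : ℕ∞) : WithBot ℕ∞) := by
    rw [Order.krullDim_eq_iSup_length]
    exact_mod_cast iSup_le fun q => by exact_mod_cast hub q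
  have h2 : ((finrank k V : ℕ∞) : WithBot ℕ∞) ≤ Order.krullDim (Submodule k V) := by
    rw [← hp]; exact_mod_cast Order.LTSeries.length_le_krullDim p
  unfold mlen
  rw [le_antisymm h1 h2]; rfl

lemma mlen_torsion {S : Type*} [CommRing S] (I : Ideal S) (M : Type*) [AddCommGroup M]
    [Module S M] (h : Module.IsTorsionBySet S M I) :
    letI := h.module
    mlen (S ⧸ I) M = mlen S M := by
  letI := h.module
  haveI : IsScalarTower S (S ⧸ I) M := h.isScalarTower
  have : Order.krullDim (Submodule (S ⧸ I) M) = Order.krullDim (Submodule S M) := by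
    refine Order.krullDim_eq_of_orderIso ⟨⟨fun p => p.restrictScalars S, fun p =>
      { carrier := p
        add_mem' := fun ha hb => p.add_mem ha hb
        zero_mem' := p.zero_mem
        smul_mem' := by
          rintro c x hx
          obtain ⟨b, rfl⟩ := Ideal.Quotient.mk_surjective c
          exact p.smul_mem b hx }, ?_, ?_⟩, ?_⟩
    · intro p; ext x; rfl
    · intro p; ext x; rfl
    · intro p q; rfl
  unfold mlen
  rw [this]

lemma mlen_zero (R M : Type*) [CommRing R] [AddCommGroup M] [Module R M] [Subsingleton M] :
    mlen R M = 0 := by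
  haveI : Unique (Submodule R M) :=
    ⟨⟨⊥⟩, fun p => by ext x; simp [Subsingleton.elim x (0 : M)]⟩
  unfold mlen
  rw [Order.krullDim_eq_zero_of_unique]; rfl

lemma one_le_mlen (R M : Type*) [CommRing R] [AddCommGroup M] [Module R M] [Nontrivial M] :
    1 ≤ mlen R M := by
  have hp : ((⊥ : Submodule R M)) < ⊤ := by
    refine lt_of_le_of_ne le_top ?_
    intro h
    obtain ⟨x, hx⟩ := exists_ne (0 : M)
    have hm : x ∈ (⊤ : Submodule R M) := Submodule.mem_top
    rw [← h] at hm
    exact hx (by simpa using hm)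
  have := Order.LTSeries.length_le_krullDim
    (⟨1, ![⊥, ⊤], by intro i; fin_cases i; simpa using hp⟩ : LTSeries (Submodule R M))
  unfold mlen
  cases hK : Order.krullDim (Submodule R M) with
  | bot => rw [hK] at this; exact absurd this (by simp)
  | coe a => rw [hK] at this; simpa using (WithBot.coe_le_coe.mp this)

lemma qlen_self {R : Type*} [CommRing R] (A : Ideal R) : qlen A A = 0 := by
  have h : Submodule.comap (Submodule.subtype A) A = ⊤ := by
    ext x; simpa using x.2
  unfold qlen
  rw [h]
  haveI : Subsingleton (↥A ⧸ (⊤ : Submodule R ↥A)) :=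
    Submodule.Quotient.subsingleton_iff.mpr rfl
  exact mlen_zero _ _

lemma key {S : Type*} [CommRing S] [IsLocalRing S] [IsNoetherianRing S] {B C A : Ideal S}
    (h1 : B ≤ C) (h2 : C ≤ A) (h3 : maximalIdeal S * A ≤ B) :
    qlen A B = qlen A C + qlen C B ∧ qlen A B ≠ ⊤ := by
  set n := maximalIdeal S with hn
  set k := S ⧸ n with hk
  letI : Field k := Ideal.Quotient.field n
  set B' : Submodule S ↥A := Submodule.comap (Submodule.subtype A) B with hB'
  set C' : Submodule S ↥A := Submodule.comap (Submodule.subtype A) C with hC'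
  set B'' : Submodule S ↥C := Submodule.comap (Submodule.subtype C) B with hB''
  have t₁ : Module.IsTorsionBySet S (↥A ⧸ B') (n : Set S) := by
    rw [Module.isTorsionBySet_quotient_iff]
    intro x r hr
    exact h3 (Ideal.mul_mem_mul hr x.2)
  have t₂ : Module.IsTorsionBySet S (↥A ⧸ C') (n : Set S) := by
    rw [Module.isTorsionBySet_quotient_iff]
    intro x r hr
    exact h1 (h3 (Ideal.mul_mem_mul hr x.2))
  have t₃ : Module.IsTorsionBySet S (↥C ⧸ B'') (n : Set S) := by
    rw [Module.isTorsionBySet_quotient_iff]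
    intro x r hr
    exact h3 (Ideal.mul_mem_mul hr (h2 x.2))
  letI m₁ : Module k (↥A ⧸ B') := t₁.module
  letI m₂ : Module k (↥A ⧸ C') := t₂.module
  letI m₃ : Module k (↥C ⧸ B'') := t₃.module
  haveI : IsScalarTower S k (↥A ⧸ B') := t₁.isScalarTower
  haveI : IsScalarTower S k (↥A ⧸ C') := t₂.isScalarTower
  haveI : IsScalarTower S k (↥C ⧸ B'') := t₃.isScalarTower
  haveI : Module.Finite S ↥A := Module.Finite.iff_fg.mpr (IsNoetherian.noetherian A)
  haveI : Module.Finite S ↥C := Module.Finite.iff_fg.mpr (IsNoetherian.noetherian C)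
  haveI : Module.Finite S (↥A ⧸ B') :=
    Module.Finite.of_surjective B'.mkQ (Submodule.Quotient.mk_surjective B')
  haveI : Module.Finite S (↥A ⧸ C') :=
    Module.Finite.of_surjective C'.mkQ (Submodule.Quotient.mk_surjective C')
  haveI : Module.Finite S (↥C ⧸ B'') :=
    Module.Finite.of_surjective B''.mkQ (Submodule.Quotient.mk_surjective B'')
  haveI : FiniteDimensional k (↥A ⧸ B') := Module.Finite.of_restrictScalars_finite S k _
  haveI : FiniteDimensional k (↥A ⧸ C') := Module.Finite.of_restrictScalars_finite S k _
  haveI : FiniteDimensional k (↥C ⧸ B'') := Module.Finite.of_restrictScalars_finite S k _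
  have e₁ : qlen A B = (finrank k (↥A ⧸ B') : ℕ∞) := by
    rw [show qlen A B = mlen S (↥A ⧸ B') from rfl, ← mlen_torsion n _ t₁]
    exact mlen_eq_finrank k _
  have e₂ : qlen A C = (finrank k (↥A ⧸ C') : ℕ∞) := by
    rw [show qlen A C = mlen S (↥A ⧸ C') from rfl, ← mlen_torsion n _ t₂]
    exact mlen_eq_finrank k _
  have e₃ : qlen C B = (finrank k (↥C ⧸ B'') : ℕ∞) := by
    rw [show qlen C B = mlen S (↥C ⧸ B'') from rfl, ← mlen_torsion n _ t₃]
    exact mlen_eq_finrank k _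
  -- the S-linear maps
  have hBC' : B' ≤ Submodule.comap LinearMap.id C' := Submodule.comap_mono h1
  set q0 : (↥A ⧸ B') →ₗ[S] (↥A ⧸ C') := Submodule.mapQ B' C' LinearMap.id hBC' with hq0
  have hincl : B'' ≤ Submodule.comap (Submodule.inclusion h2) B' := by
    intro x hx; exact hx
  set g0 : (↥C ⧸ B'') →ₗ[S] (↥A ⧸ B') := Submodule.mapQ B'' B' (Submodule.inclusion h2) hincl
    with hg0
  set q' : (↥A ⧸ B') →ₗ[k] (↥A ⧸ C') :=
    { toFun := q0
      map_add' := map_add q0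
      map_smul' := fun c x => by
        obtain ⟨b, rfl⟩ := Ideal.Quotient.mk_surjective c
        exact map_smul q0 b x } with hq'
  set g' : (↥C ⧸ B'') →ₗ[k] (↥A ⧸ B') :=
    { toFun := g0
      map_add' := map_add g0
      map_smul' := fun c x => by
        obtain ⟨b, rfl⟩ := Ideal.Quotient.mk_surjective c
        exact map_smul g0 b x } with hg'
  have hsurj : Function.Surjective q' := by
    intro y
    obtain ⟨a, rfl⟩ := Submodule.Quotient.mk_surjective C' y
    exact ⟨Submodule.Quotient.mk a, rfl⟩
  have hinj : Function.Injective g' := by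
    rw [← LinearMap.ker_eq_bot]
    ext z
    obtain ⟨c, rfl⟩ := Submodule.Quotient.mk_surjective B'' z
    simp only [LinearMap.mem_ker, Submodule.mem_bot]
    constructor
    · intro h
      have : (Submodule.inclusion h2 c : ↥A) ∈ B' := by
        rwa [← Submodule.Quotient.mk_eq_zero]
      rw [Submodule.Quotient.mk_eq_zero]
      exact this
    · intro h
      rw [h]
      exact map_zero g'
  have hrange : LinearMap.range g' = LinearMap.ker q' := by
    ext z
    obtain ⟨a, rfl⟩ := Submodule.Quotient.mk_surjective B' z
    simp only [LinearMap.mem_range, LinearMap.mem_ker]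
    constructor
    · rintro ⟨w, hw⟩
      obtain ⟨c, rfl⟩ := Submodule.Quotient.mk_surjective B'' w
      have : g0 (Submodule.Quotient.mk c) = Submodule.Quotient.mk a := hw
      rw [Submodule.mapQ_apply] at this
      have hdiff : (Submodule.inclusion h2 c : ↥A) - a ∈ B' :=
        (Submodule.Quotient.eq B').mp this
      have : q0 (Submodule.Quotient.mk a) = 0 := by
        rw [Submodule.mapQ_apply, Submodule.Quotient.mk_eq_zero]
        have haC : (a : S) ∈ C := by
          have h1' : ((Submodule.inclusion h2 c : ↥A) : S) - (a : S) ∈ B := hdiff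
          have h2' : ((Submodule.inclusion h2 c : ↥A) : S) = (c : S) := rfl
          rw [h2'] at h1'
          have := sub_sub_cancel (c : S) (a : S)
          have : (a : S) = (c : S) - ((c : S) - (a : S)) := by ring
          rw [this]
          exact Submodule.sub_mem C c.2 (h1 h1')
        exact haC
      exact this
    · intro h
      have h' : q0 (Submodule.Quotient.mk a) = 0 := h
      rw [Submodule.mapQ_apply, Submodule.Quotient.mk_eq_zero] at h'
      have haC : (a : S) ∈ C := h'
      refine ⟨Submodule.Quotient.mk ⟨(a : S), haC⟩, ?_⟩
      show g0 _ = _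
      rw [Submodule.mapQ_apply]
      congr 1
  have hrn := LinearMap.finrank_range_add_finrank_ker q'
  rw [LinearMap.range_eq_top.mpr hsurj, finrank_top, ← hrange] at hrn
  have hker : finrank k ↥(LinearMap.range g') = finrank k (↥C ⧸ B'') :=
    (LinearEquiv.finrank_eq (LinearEquiv.ofInjective g' hinj)).symm
  rw [hker] at hrn
  constructor
  · rw [e₁, e₂, e₃, ← hrn]
    push_cast
    ring
  · rw [e₁]
    exact ENat.coe_ne_top _

/-- Let `(S, n)` be a regular local ring and `I` a nonzero ideal with
`depth S/I = 0` (i.e. `I` proper and `(I : n) ≠ I`). Then `I` is Burch (`n(I:n) ≠ nI`)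
iff `ν(I : n) < r(S/I) + ν(I)`, where `ν(K) = dim_k K/nK` and `r(S/I) = dim_k (I:n)/I`. -/
theorem burch_iff_nu_lt {S : Type*} [CommRing S] [IsLocalRing S] (hreg : IsRegularLocal S)
    (I : Ideal S) (hI0 : I ≠ ⊥) (hItop : I ≠ ⊤)
    (hdepth : Submodule.colon I (maximalIdeal S) ≠ I) :
    maximalIdeal S * Submodule.colon I (maximalIdeal S) ≠ maximalIdeal S * I ↔
      qlen (Submodule.colon I (maximalIdeal S))
          (maximalIdeal S * Submodule.colon I (maximalIdeal S)) <
        qlen (Submodule.colon I (maximalIdeal S)) I + qlen I (maximalIdeal S * I) := by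
  haveI : IsNoetherianRing S := hreg.1
  set n := maximalIdeal S with hn
  set J := Submodule.colon I n with hJ
  have hIJ : I ≤ J := by
    intro x hx
    rw [hJ, Submodule.mem_colon]
    intro p hp
    rw [smul_eq_mul]
    exact Ideal.mul_mem_right p I hx
  have hnJI : n * J ≤ I := by
    rw [Ideal.mul_le]
    intro r hr s hs
    have := (Submodule.mem_colon.mp hs) r hr
    rwa [smul_eq_mul, mul_comm] at this
  have hnInJ : n * I ≤ n * J := Ideal.mul_mono_right hIJ
  obtain ⟨K1, hfin1⟩ := key (S := S) hnJI hIJ (le_refl (n * J))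
  obtain ⟨K2, _⟩ := key (S := S) hnInJ hnJI (le_refl (n * I))
  have hRHS : qlen J I + qlen I (n * I) = qlen J (n * J) + qlen (n * J) (n * I) := by
    rw [K2, K1]; ring
  rw [hRHS]
  constructor
  · intro hne
    have hnotle : ¬ (n * J ≤ n * I) := fun hle => hne (le_antisymm hle hnInJ)
    obtain ⟨x, hxJ, hxI⟩ := SetLike.not_le_iff_exists.mp hnotle
    have hNT : Nontrivial (↥(n * J) ⧸ Submodule.comap (Submodule.subtype (n * J)) (n * I)) := by
      refine ⟨Submodule.Quotient.mk ⟨x, hxJ⟩, 0, ?_⟩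
      rw [ne_eq, Submodule.Quotient.mk_eq_zero]
      exact hxI
    have h1le : 1 ≤ qlen (n * J) (n * I) := one_le_mlen S _
    obtain ⟨m, hm⟩ := Option.ne_none_iff_exists'.mp hfin1
    rw [hm]
    calc (m : ℕ∞) < m + 1 := by exact_mod_cast Nat.lt_succ_self m
        _ ≤ m + qlen (n * J) (n * I) := add_le_add_right h1le m
  · intro hlt
    intro heq
    rw [heq, qlen_self] at hlt
    simp at hlt
end

section
/- Let (R, m, k) be a local ring such that soc R is not contained in m² and edim R ≥ 2. Then the maximal ideal m decomposes as a direct sum of ideals m = I ⊕ J with I ≅ k and J ≠ 0; in particular R is isomorphic to a nontrivial fiber product R/I ×_k R/J. -/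
open IsLocalRing

lemma mlen_le_one_of_simple {R M : Type*} [CommRing R] [AddCommGroup M] [Module R M]
    (h : ∀ N : Submodule R M, N = ⊥ ∨ N = ⊤) : mlen R M ≤ 1 := by
  have hk : Order.krullDim (Submodule R M) ≤ (1 : ℕ∞) := by
    rw [Order.krullDim]
    apply iSup_le
    intro p
    rw [show ((1:ℕ∞) : WithBot ℕ∞) = ((1:ℕ) : WithBot ℕ∞) by rfl, Nat.cast_le]
    by_contra hlen
    push_neg at hlen
    have h01 : p.toFun ⟨0, by omega⟩ < p.toFun ⟨1, by omega⟩ :=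
      p.strictMono (by simp [Fin.lt_def])
    have h12 : p.toFun ⟨1, by omega⟩ < p.toFun ⟨2, by omega⟩ :=
      p.strictMono (by simp [Fin.lt_def])
    rcases h (p.toFun ⟨1, by omega⟩) with h1 | h1
    · rw [h1] at h01; exact not_lt_bot h01
    · rw [h1] at h12; exact not_top_lt h12
  unfold mlen
  rcases hd : Order.krullDim (Submodule R M) with _ | d
  · exact zero_le_one
  · rw [hd] at hk
    exact WithBot.coe_le_coe.mp hk

/-- If `(R, m, k)` is a Noetherian local ring with `soc R ⊄ m²` and
`edim R ≥ 2`, then `m = I ⊕ J` for ideals `I ≅ k` and `J ≠ 0`. -/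
theorem maximalIdeal_decomposes {R : Type*} [CommRing R] [IsNoetherianRing R] [IsLocalRing R]
    (hsoc : ¬ Submodule.colon (⊥ : Ideal R) (maximalIdeal R) ≤ (maximalIdeal R) ^ 2)
    (hedim : 2 ≤ qlen (maximalIdeal R) ((maximalIdeal R) ^ 2)) :
    ∃ I J : Ideal R, I ⊔ J = maximalIdeal R ∧ I ⊓ J = ⊥ ∧
      Nonempty (↥I ≃ₗ[R] ResidueField R) ∧ J ≠ ⊥ := by
  classical
  obtain ⟨x, hxsoc, hxm2⟩ := SetLike.not_le_iff_exists.mp hsoc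
  have hxann : ∀ p ∈ maximalIdeal R, x * p = 0 := fun p hp => by
    have := Submodule.mem_colon.mp hxsoc p hp
    simpa using this
  have hx0 : x ≠ 0 := fun h => hxm2 (h ▸ (Submodule.zero_mem _))
  -- x ∈ m
  have hxm : x ∈ maximalIdeal R := by
    by_contra hxm
    have hu : IsUnit x := by
      rwa [IsLocalRing.mem_maximalIdeal, mem_nonunits_iff, not_not] at hxm
    have hmbot : maximalIdeal R = ⊥ := by
      ext p
      simp only [Submodule.mem_bot]
      refine ⟨fun hp => ?_, fun hp => hp ▸ Submodule.zero_mem _⟩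
      exact (hu.mul_right_eq_zero).mp (hxann p hp)
    rw [hmbot] at hedim
    have hsub : Subsingleton ((↥(⊥ : Ideal R)) ⧸
        Submodule.comap (Submodule.subtype (⊥ : Ideal R)) ((⊥ : Ideal R) ^ 2)) := by
      have : Subsingleton (↥(⊥ : Ideal R)) := by infer_instance
      exact (Submodule.Quotient.mk_surjective _).subsingleton
    have := mlen_le_one_of_simple (R := R)
      (M := (↥(⊥ : Ideal R)) ⧸
        Submodule.comap (Submodule.subtype (⊥ : Ideal R)) ((⊥ : Ideal R) ^ 2))
      (fun N => Or.inl (Subsingleton.elim _ _))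
    have h2 : (2 : ℕ∞) ≤ 1 := le_trans hedim this
    exact absurd h2 (by decide)
  -- Zorn to get J
  set S : Set (Ideal R) := {K | (maximalIdeal R) ^ 2 ≤ K ∧ K ≤ maximalIdeal R ∧ x ∉ K} with hS
  have hm2m : (maximalIdeal R) ^ 2 ≤ maximalIdeal R := Ideal.pow_le_self two_ne_zero
  have hm2S : (maximalIdeal R) ^ 2 ∈ S := ⟨le_rfl, hm2m, hxm2⟩
  obtain ⟨J, -, hJS, hJmax⟩ := zorn_le_nonempty₀ S (fun c hcS hc y hy => by
    refine ⟨sSup c, ⟨?_, ?_, ?_⟩, fun z hz => le_sSup hz⟩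
    · exact le_trans (hcS hy).1 (le_sSup hy)
    · exact sSup_le (fun z hz => (hcS hz).2.1)
    · intro hxs
      obtain ⟨p, hpc, hxp⟩ := (Submodule.mem_sSup_of_directed ⟨y, hy⟩ hc.directedOn).mp hxs
      exact (hcS hpc).2.2 hxp) _ hm2S
  obtain ⟨hJ1, hJ2, hJ3⟩ := hJS
  -- the sup
  have hsup : Ideal.span {x} ⊔ J = maximalIdeal R := by
    refine le_antisymm (sup_le (Ideal.span_le.mpr (by simpa using hxm)) hJ2) ?_
    intro y hy
    by_contra hyIJ
    have hxK : x ∈ J ⊔ Ideal.span {y} := by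
      by_contra hxK
      have hKS : J ⊔ Ideal.span {y} ∈ S :=
        ⟨le_trans hJ1 le_sup_left,
         sup_le hJ2 (Ideal.span_le.mpr (by simpa using hy)), hxK⟩
      have : J ⊔ Ideal.span {y} ≤ J := hJmax hKS le_sup_left
      exact hyIJ (Submodule.mem_sup_right
        (this (Submodule.mem_sup_right (Ideal.subset_span rfl))))
    obtain ⟨j, hj, b, hb, hjb⟩ := Submodule.mem_sup.mp hxK
    obtain ⟨r, rfl⟩ := Ideal.mem_span_singleton'.mp hb
    by_cases hr : IsUnit r
    · obtain ⟨u, rfl⟩ := hr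
      apply hyIJ
      have hxj : x - j ∈ Ideal.span {x} ⊔ J :=
        Submodule.sub_mem _ (Submodule.mem_sup_left (Ideal.subset_span rfl))
          (Submodule.mem_sup_right hj)
      have : (↑u⁻¹ : R) * (x - j) ∈ Ideal.span {x} ⊔ J := Ideal.mul_mem_left _ _ hxj
      have hyeq : (↑u⁻¹ : R) * (x - j) = y := by
        have : x - j = ↑u * y := by rw [← hjb]; ring
        rw [this, ← mul_assoc, Units.inv_mul, one_mul]
      rwa [hyeq] at this
    · have hrm : r ∈ maximalIdeal R := hr
      have hry : r * y ∈ (maximalIdeal R) ^ 2 := by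
        rw [pow_two]; exact Ideal.mul_mem_mul hrm hy
      have : x ∈ J := by
        rw [← hjb]; exact Submodule.add_mem _ hj (hJ1 hry)
      exact hJ3 this
  -- the inf
  have hinf : Ideal.span {x} ⊓ J = ⊥ := by
    rw [eq_bot_iff]
    rintro z ⟨hz1, hz2⟩
    obtain ⟨r, rfl⟩ := Ideal.mem_span_singleton'.mp hz1
    by_cases hr : IsUnit r
    · obtain ⟨u, rfl⟩ := hr
      exfalso
      apply hJ3
      have : (↑u⁻¹ : R) * (↑u * x) ∈ J := Ideal.mul_mem_left _ _ hz2
      rwa [← mul_assoc, Units.inv_mul, one_mul] at this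
    · have hrm : r ∈ maximalIdeal R := hr
      simp only [Submodule.mem_bot]
      rw [mul_comm]
      exact hxann r hrm
  -- the isomorphism I ≃ k
  have hker : LinearMap.ker (LinearMap.toSpanSingleton R R x) = maximalIdeal R := by
    ext r
    simp only [LinearMap.mem_ker, LinearMap.toSpanSingleton_apply, smul_eq_mul]
    constructor
    · intro h
      by_contra hrm
      have hu : IsUnit r := by
        rwa [IsLocalRing.mem_maximalIdeal, mem_nonunits_iff, not_not] at hrm
      exact hx0 (hu.mul_right_eq_zero.mp h)
    · intro h; rw [mul_comm]; exact hxann r h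
  have hrange : LinearMap.range (LinearMap.toSpanSingleton R R x) = Ideal.span {x} :=
    (LinearMap.span_singleton_eq_range R R x).symm
  have e : ↥(Ideal.span {x} : Ideal R) ≃ₗ[R] ResidueField R :=
    (LinearEquiv.ofEq _ _ hrange.symm).trans
      (((LinearMap.toSpanSingleton R R x).quotKerEquivRange.symm).trans
        (Submodule.quotEquivOfEq _ _ hker))
  -- J ≠ ⊥
  have hJne : J ≠ ⊥ := by
    intro hJbot
    have hmx : maximalIdeal R = Ideal.span {x} := by rw [← hsup, hJbot, sup_bot_eq]
    have hxx : x * x = 0 := hxann x hxm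
    have hm2bot : (maximalIdeal R) ^ 2 = ⊥ := by
      rw [pow_two]
      conv_lhs => rw [hmx]
      rw [Ideal.span_singleton_mul_span_singleton, hxx, Ideal.span_singleton_eq_bot]
    have hsimple : ∀ N : Submodule R (↥(maximalIdeal R) ⧸
        Submodule.comap (Submodule.subtype (maximalIdeal R)) ((maximalIdeal R) ^ 2)),
        N = ⊥ ∨ N = ⊤ := by
      intro N
      by_cases hN : N = ⊥
      · exact Or.inl hN
      right
      obtain ⟨q, hqN, hq0⟩ := (Submodule.ne_bot_iff N).mp hN
      obtain ⟨z, rfl⟩ := Submodule.Quotient.mk_surjective _ q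
      have hz2 : (z : R) ∈ Ideal.span {x} := by rw [← hmx]; exact z.2
      obtain ⟨r, hr⟩ := Ideal.mem_span_singleton'.mp hz2
      have hru : IsUnit r := by
        by_contra hrnu
        have hrm : r ∈ maximalIdeal R := hrnu
        apply hq0
        have hz0 : (z : R) = 0 := by rw [← hr, mul_comm]; exact hxann r hrm
        have : z = 0 := Subtype.ext hz0
        rw [this]
        exact Submodule.Quotient.mk_zero _
      obtain ⟨u, rfl⟩ := hru
      rw [eq_top_iff]
      rintro q' -
      obtain ⟨w, rfl⟩ := Submodule.Quotient.mk_surjective _ q'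
      have hw2 : (w : R) ∈ Ideal.span {x} := by rw [← hmx]; exact w.2
      obtain ⟨s, hs⟩ := Ideal.mem_span_singleton'.mp hw2
      have hw : w = (s * ↑u⁻¹) • z := by
        apply Subtype.ext
        show (w : R) = (s * ↑u⁻¹) • (z : R)
        rw [smul_eq_mul, ← hr, ← hs]
        rw [mul_assoc, ← mul_assoc (↑u⁻¹ : R), Units.inv_mul, one_mul]
      rw [hw]
      have : Submodule.Quotient.mk ((s * ↑u⁻¹ : R) • z) =
          (s * ↑u⁻¹ : R) • (Submodule.Quotient.mk z :
            ↥(maximalIdeal R) ⧸ Submodule.comap (Submodule.subtype (maximalIdeal R))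
              ((maximalIdeal R) ^ 2)) := rfl
      rw [this]
      exact Submodule.smul_mem _ _ hqN
    have hle := mlen_le_one_of_simple hsimple
    unfold qlen at hedim
    exact absurd (le_trans hedim hle) (by decide)
  exact ⟨Ideal.span {x}, J, hsup, hinf, ⟨e⟩, hJne⟩
end

section
/- Let R be an artinian stretched local ring (dim_k m²/m³ ≤ 1) that is non-Gorenstein. Then the type of R satisfies r(R) ≤ edim R. -/
open IsLocalRing

section generalmlen
variable {R M N : Type*} [CommRing R] [AddCommGroup M] [Module R M]
  [AddCommGroup N] [Module R N]

lemma mlen_eq_iSup : mlen R M = ⨆ (p : LTSeries (Submodule R M)), (p.length : ℕ∞) := by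
  rw [mlen, Order.krullDim_eq_iSup_length, WithBot.unbotD_coe]

lemma krullDim_eq_mlen :
    Order.krullDim (Submodule R M) = ((mlen R M : ℕ∞) : WithBot ℕ∞) := by
  rw [mlen_eq_iSup, Order.krullDim_eq_iSup_length]

lemma length_le_mlen (p : LTSeries (Submodule R M)) : (p.length : ℕ∞) ≤ mlen R M := by
  rw [mlen_eq_iSup]; exact le_iSup (fun p : LTSeries (Submodule R M) => (p.length : ℕ∞)) p

lemma height_le_mlen (a : Submodule R M) : Order.height a ≤ mlen R M := by
  have := Order.height_le_krullDim a
  rw [krullDim_eq_mlen] at this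
  exact_mod_cast this

lemma mlen_congr (e : M ≃ₗ[R] N) : mlen R M = mlen R N := by
  rw [mlen, mlen, Order.krullDim_eq_of_orderIso (Submodule.orderIsoMapComap e)]

lemma mlen_le_one (h : ∀ P : Submodule R M, P = ⊥ ∨ P = ⊤) : mlen R M ≤ 1 := by
  rw [mlen_eq_iSup]; apply iSup_le; intro p
  by_contra hc
  push_neg at hc
  have h2 : 2 ≤ p.length := by
    have : (1:ℕ∞) < (p.length : ℕ∞) := hc
    exact_mod_cast this
  have h01 : p ⟨0, by omega⟩ < p ⟨1, by omega⟩ := p.strictMono (Fin.mk_lt_mk.mpr (by omega))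
  have h12 : p ⟨1, by omega⟩ < p ⟨2, by omega⟩ := p.strictMono (Fin.mk_lt_mk.mpr (by omega))
  rcases h (p ⟨1, by omega⟩) with h1 | h1 <;> rw [h1] at h01 h12
  · exact not_lt_bot h01
  · exact not_top_lt h12

lemma two_le_mlen {P : Submodule R M} (h1 : P ≠ ⊥) (h2 : P ≠ ⊤) : 2 ≤ mlen R M := by
  have hp : ∀ i : Fin 2, (![⊥, P, ⊤] : Fin 3 → Submodule R M) i.castSucc <
      (![⊥, P, ⊤] : Fin 3 → Submodule R M) i.succ := by
    intro i
    fin_cases i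
    · simpa using bot_lt_iff_ne_bot.2 h1
    · simpa using lt_top_iff_ne_top.2 h2
  exact length_le_mlen (⟨2, ![⊥, P, ⊤], hp⟩ : LTSeries (Submodule R M))

lemma submodule_trivial_of_mlen_le_one (h : mlen R M ≤ 1) (P : Submodule R M) :
    P = ⊥ ∨ P = ⊤ := by
  by_contra hc
  push_neg at hc
  exact absurd (le_trans (two_le_mlen hc.1 hc.2) h) (by norm_num)

lemma len_le_height_prod {α β : Type*} [Preorder α] [Preorder β] :
    ∀ (n : ℕ) (p : LTSeries (α × β)), p.length = n →
    (n : ℕ∞) ≤ Order.height p.last.1 + Order.height p.last.2 := by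
  intro n
  induction n with
  | zero => intro p _; simp
  | succ n ih =>
    intro p hp
    have hne : p.length ≠ 0 := by omega
    have hrel := p.eraseLast_last_rel_last hne
    have hlen : p.eraseLast.length = n := by
      simp [RelSeries.eraseLast_length, hp]
    have IH := ih p.eraseLast hlen
    have hcast : ((n + 1 : ℕ) : ℕ∞) = (n : ℕ∞) + 1 := by push_cast; ring
    rcases Prod.lt_iff.1 hrel with ⟨h1, h2⟩ | ⟨h1, h2⟩
    · have e1 : Order.height p.eraseLast.last.1 + 1 ≤ Order.height p.last.1 := by
        rw [Order.height_eq_iSup_lt_height p.last.1]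
        exact le_iSup₂_of_le p.eraseLast.last.1 h1 le_rfl
      calc ((n + 1 : ℕ) : ℕ∞) = ((n : ℕ∞) + 1) := hcast
        _ ≤ (Order.height p.eraseLast.last.1 + Order.height p.eraseLast.last.2) + 1 :=
            add_le_add_left IH 1
        _ = (Order.height p.eraseLast.last.1 + 1) + Order.height p.eraseLast.last.2 := by
            rw [add_right_comm]
        _ ≤ Order.height p.last.1 + Order.height p.last.2 :=
            add_le_add e1 (Order.height_mono h2)
    · have e1 : Order.height p.eraseLast.last.2 + 1 ≤ Order.height p.last.2 := by
        rw [Order.height_eq_iSup_lt_height p.last.2]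
        exact le_iSup₂_of_le p.eraseLast.last.2 h2 le_rfl
      calc ((n + 1 : ℕ) : ℕ∞) = ((n : ℕ∞) + 1) := hcast
        _ ≤ (Order.height p.eraseLast.last.1 + Order.height p.eraseLast.last.2) + 1 :=
            add_le_add_left IH 1
        _ = Order.height p.eraseLast.last.1 + (Order.height p.eraseLast.last.2 + 1) := by
            rw [add_assoc]
        _ ≤ Order.height p.last.1 + Order.height p.last.2 :=
            add_le_add (Order.height_mono h1) e1

lemma mlen_le_add (K : Submodule R M) : mlen R M ≤ mlen R ↥K + mlen R (M ⧸ K) := by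
  rw [mlen_eq_iSup]
  apply iSup_le; intro p
  have hf : StrictMono (fun (P : Submodule R M) =>
      ((Submodule.comap K.subtype (P ⊓ K), Submodule.map K.mkQ P) :
        Submodule R ↥K × Submodule R (M ⧸ K))) := by
    intro a b hab
    rw [Prod.lt_iff]
    by_cases hinf : b ⊓ K ≤ a ⊓ K
    · right
      constructor
      · exact Submodule.comap_mono (inf_le_inf_right K hab.le)
      · have hsup : a ⊔ K < b ⊔ K := sup_lt_sup_of_lt_of_inf_le_inf hab hinf
        refine lt_of_le_of_ne (Submodule.map_mono hab.le) (fun hEq => hsup.ne ?_)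
        have := congrArg (Submodule.comap K.mkQ) hEq
        rwa [Submodule.comap_map_mkQ, Submodule.comap_map_mkQ, sup_comm K a, sup_comm K b]
          at this
    · left
      constructor
      · have hlt : a ⊓ K < b ⊓ K :=
          lt_of_le_of_ne (inf_le_inf_right K hab.le) (fun hEq => hinf (le_of_eq hEq.symm))
        refine lt_of_le_of_ne (Submodule.comap_mono hlt.le) (fun hEq => hlt.ne ?_)
        have := congrArg (Submodule.map K.subtype) hEq
        rw [Submodule.map_comap_subtype, Submodule.map_comap_subtype,
          inf_eq_right.mpr inf_le_right, inf_eq_right.mpr inf_le_right] at this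
        exact this
      · exact Submodule.map_mono hab.le
  set q := p.map _ hf with hq
  have hlen : q.length = p.length := rfl
  calc (p.length : ℕ∞) ≤ Order.height q.last.1 + Order.height q.last.2 :=
        len_le_height_prod p.length q hlen
    _ ≤ mlen R ↥K + mlen R (M ⧸ K) := add_le_add (height_le_mlen _) (height_le_mlen _)

lemma mlen_add_one_le {V : Submodule R M} (hV : V ≠ ⊤) : mlen R ↥V + 1 ≤ mlen R M := by
  have h1 : mlen R ↥V ≤ Order.height V := by
    rw [mlen_eq_iSup]; apply iSup_le; intro p
    have hinj := Submodule.map_injective_of_injective (Submodule.injective_subtype V)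
    have hmono : StrictMono (fun P : Submodule R ↥V => Submodule.map V.subtype P) := by
      intro a b hab
      exact lt_of_le_of_ne (Submodule.map_mono hab.le) (fun h => hab.ne (hinj h))
    have hlast : (p.map _ hmono).last ≤ V := by
      rw [LTSeries.last_map]
      exact Submodule.map_subtype_le V p.last
    exact Order.length_le_height hlast
  have h2 : Order.height V + 1 ≤ Order.height (⊤ : Submodule R M) := by
    rw [Order.height_eq_iSup_lt_height (⊤ : Submodule R M)]
    exact le_iSup₂_of_le V (lt_top_iff_ne_top.2 hV) le_rfl
  calc mlen R ↥V + 1 ≤ Order.height V + 1 := add_le_add_left h1 1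
    _ ≤ Order.height (⊤ : Submodule R M) := h2
    _ ≤ mlen R M := height_le_mlen _

end generalmlen

section ringside
variable {R : Type*} [CommRing R] [IsLocalRing R] [IsArtinianRing R]

lemma mIsNilpotent : IsNilpotent (maximalIdeal R) := by
  have h := IsArtinianRing.isNilpotent_jacobson_bot (R := R)
  rwa [IsLocalRing.jacobson_eq_maximalIdeal ⊥ bot_ne_top] at h

lemma nak {I J : Ideal R} (h : I ≤ J ⊔ maximalIdeal R * I) : I ≤ J := by
  obtain ⟨n, hn⟩ := mIsNilpotent (R := R)
  have key : ∀ k, I ≤ J ⊔ (maximalIdeal R) ^ k * I := by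
    intro k
    induction k with
    | zero => simpa using le_sup_right
    | succ k ih =>
      refine ih.trans (sup_le le_sup_left ?_)
      calc (maximalIdeal R) ^ k * I
          ≤ (maximalIdeal R) ^ k * (J ⊔ maximalIdeal R * I) := Ideal.mul_mono_right h
        _ = (maximalIdeal R) ^ k * J ⊔ (maximalIdeal R) ^ k * (maximalIdeal R * I) :=
            Ideal.mul_sup _ _ _
        _ ≤ J ⊔ (maximalIdeal R) ^ (k + 1) * I := by
            apply sup_le_sup Ideal.mul_le_right
            rw [pow_succ, mul_assoc]
  have := key n
  rwa [hn, Submodule.zero_eq_bot, Submodule.bot_mul, sup_bot_eq] at this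

lemma pow_span {y z : R} (hy : y ∈ maximalIdeal R) (hz : z ∈ maximalIdeal R)
    (hspan : (maximalIdeal R) ^ 2 = Ideal.span {y * z}) :
    ∀ j : ℕ, (maximalIdeal R) ^ (2 + j) = Ideal.span {y ^ (j + 1) * z} := by
  intro j
  induction j with
  | zero => simpa using hspan
  | succ j ih =>
    have h1 : (maximalIdeal R) ^ (2 + (j + 1)) = (maximalIdeal R) ^ (2 + j) * maximalIdeal R := by
      rw [show 2 + (j + 1) = (2 + j) + 1 by omega, pow_succ]
    rw [h1, ih]
    apply le_antisymm
    · rw [Ideal.mul_le]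
      intro a ha u hu
      obtain ⟨c, hc⟩ := Ideal.mem_span_singleton'.1 ha
      have hzu : z * u ∈ (maximalIdeal R) ^ 2 := by
        rw [pow_two]; exact Ideal.mul_mem_mul hz hu
      rw [hspan] at hzu
      obtain ⟨d, hd⟩ := Ideal.mem_span_singleton'.1 hzu
      apply Ideal.mem_span_singleton'.2
      refine ⟨c * d, ?_⟩
      calc c * d * (y ^ (j + 1 + 1) * z) = c * (y ^ (j + 1) * (d * (y * z))) := by ring
        _ = c * (y ^ (j + 1) * (z * u)) := by rw [hd]
        _ = (c * (y ^ (j + 1) * z)) * u := by ring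
        _ = a * u := by rw [hc]
    · rw [Ideal.span_singleton_le_iff_mem]
      have hmem : (y ^ (j + 1) * z) * y ∈ Ideal.span {y ^ (j + 1) * z} * maximalIdeal R :=
        Ideal.mul_mem_mul (Ideal.mem_span_singleton_self _) hy
      have heq : y ^ (j + 1 + 1) * z = (y ^ (j + 1) * z) * y := by ring
      rw [heq]; exact hmem

lemma gen_yz (hm2 : (maximalIdeal R) ^ 2 ≠ ⊥)
    (hx : ∃ x ∈ (maximalIdeal R) ^ 2,
      (maximalIdeal R) ^ 2 ≤ Ideal.span {x} ⊔ (maximalIdeal R) ^ 3) :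
    ∃ y z, y ∈ maximalIdeal R ∧ z ∈ maximalIdeal R ∧
      (maximalIdeal R) ^ 2 = Ideal.span {y * z} := by
  obtain ⟨x, hxm, hxle⟩ := hx
  have hm3 : (maximalIdeal R) ^ 3 = maximalIdeal R * (maximalIdeal R) ^ 2 := by
    rw [← pow_succ']
  have hspan : (maximalIdeal R) ^ 2 = Ideal.span {x} := by
    apply le_antisymm
    · exact nak (by rwa [← hm3])
    · rwa [Ideal.span_singleton_le_iff_mem]
  have hmm : ¬ (maximalIdeal R * maximalIdeal R ≤ (maximalIdeal R) ^ 3) := by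
    intro hcon
    apply hm2
    rw [← le_bot_iff]
    apply nak
    rw [bot_sup_eq, ← hm3, pow_two]
    exact hcon
  rw [Ideal.mul_le] at hmm
  push_neg at hmm
  obtain ⟨y, hy, z, hz, hyz⟩ := hmm
  have hyz2 : y * z ∈ (maximalIdeal R) ^ 2 := by
    rw [pow_two]; exact Ideal.mul_mem_mul hy hz
  rw [hspan] at hyz2
  obtain ⟨c, hc⟩ := Ideal.mem_span_singleton'.1 hyz2
  have hcu : IsUnit c := by
    by_contra hcu
    apply hyz
    have hcm : c ∈ maximalIdeal R :=
      (IsLocalRing.mem_maximalIdeal c).mpr (mem_nonunits_iff.mpr hcu)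
    have h1 : c * x ∈ maximalIdeal R * (maximalIdeal R) ^ 2 := Ideal.mul_mem_mul hcm hxm
    rw [← hm3] at h1
    rwa [hc] at h1
  refine ⟨y, z, hy, hz, ?_⟩
  rw [hspan]
  have hinv : (↑hcu.unit⁻¹ : R) * c = 1 := IsUnit.val_inv_mul hcu
  apply le_antisymm
  · rw [Ideal.span_singleton_le_iff_mem]
    exact Ideal.mem_span_singleton'.2
      ⟨↑hcu.unit⁻¹, by rw [← hc, ← mul_assoc, hinv, one_mul]⟩
  · rw [Ideal.span_singleton_le_iff_mem]
    exact Ideal.mem_span_singleton'.2 ⟨c, hc⟩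

lemma W_gen (hm2 : (maximalIdeal R) ^ 2 ≠ ⊥)
    (hyz : ∃ y z, y ∈ maximalIdeal R ∧ z ∈ maximalIdeal R ∧
      (maximalIdeal R) ^ 2 = Ideal.span {y * z})
    (W : Ideal R) (hW : W ≤ (maximalIdeal R) ^ 2) :
    ∃ w ∈ W, W = Ideal.span {w} := by
  by_cases hbot : W = ⊥
  · refine ⟨0, W.zero_mem, ?_⟩
    rw [hbot]
    exact (Ideal.span_singleton_eq_bot.mpr rfl).symm
  · obtain ⟨n, hn⟩ := mIsNilpotent (R := R)
    classical
    have hex : ∃ j, ¬ W ≤ (maximalIdeal R) ^ j := by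
      refine ⟨n, ?_⟩
      rw [hn, Submodule.zero_eq_bot]
      simpa [le_bot_iff] using hbot
    have hjspec := Nat.find_spec hex
    have hjmin : ∀ k < Nat.find hex, W ≤ (maximalIdeal R) ^ k :=
      fun k hk => not_not.1 (Nat.find_min hex hk)
    have h3 : 3 ≤ Nat.find hex := by
      by_contra hcon
      push_neg at hcon
      apply hjspec
      have hW1 : W ≤ maximalIdeal R := hW.trans (Ideal.pow_le_self (by norm_num))
      have hW0 : W ≤ (maximalIdeal R) ^ 0 := by rw [pow_zero, Ideal.one_eq_top]; exact le_top
      interval_cases h : Nat.find hex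
      · exact hW0
      · rw [pow_one]; exact hW1
      · exact hW
    set i := Nat.find hex - 1 with hidef
    have hile : W ≤ (maximalIdeal R) ^ i := hjmin i (by omega)
    have hisucc : ¬ W ≤ (maximalIdeal R) ^ (i + 1) := by
      have he : i + 1 = Nat.find hex := by omega
      rw [he]; exact hjspec
    obtain ⟨w, hwW, hwnot⟩ := SetLike.not_le_iff_exists.1 hisucc
    obtain ⟨y, z, hy, hz, hspan⟩ := hyz
    have hpow := pow_span hy hz hspan (i - 2)
    have h2i : 2 + (i - 2) = i := by omega
    rw [h2i] at hpow
    obtain ⟨r, hr⟩ := Ideal.mem_span_singleton'.1 (hpow ▸ hile hwW)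
    have hrunit : IsUnit r := by
      by_contra hru
      apply hwnot
      have hrm : r ∈ maximalIdeal R :=
        (IsLocalRing.mem_maximalIdeal r).mpr (mem_nonunits_iff.mpr hru)
      have h1 : r * (y ^ (i - 2 + 1) * z) ∈ maximalIdeal R * (maximalIdeal R) ^ i :=
        Ideal.mul_mem_mul hrm (hpow ▸ Ideal.mem_span_singleton_self _)
      rw [← pow_succ'] at h1
      rwa [hr] at h1
    refine ⟨w, hwW, le_antisymm ?_ ((Ideal.span_singleton_le_iff_mem W).2 hwW)⟩
    calc W ≤ (maximalIdeal R) ^ i := hile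
      _ = Ideal.span {y ^ (i - 2 + 1) * z} := hpow
      _ ≤ Ideal.span {w} := by
          rw [Ideal.span_singleton_le_iff_mem, Ideal.mem_span_singleton]
          refine ⟨↑hrunit.unit⁻¹, ?_⟩
          calc y ^ (i - 2 + 1) * z
              = (↑hrunit.unit⁻¹ * ↑hrunit.unit) * (y ^ (i - 2 + 1) * z) := by
                rw [Units.inv_mul, one_mul]
            _ = ↑hrunit.unit⁻¹ * (r * (y ^ (i - 2 + 1) * z)) := by
                rw [IsUnit.unit_spec, mul_assoc]
            _ = w * ↑hrunit.unit⁻¹ := by rw [hr, mul_comm]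

end ringside

/-- An artinian stretched (`dim_k m²/m³ ≤ 1`) non-Gorenstein
(`dim_k soc R ≠ 1`) local ring satisfies `r(R) ≤ edim R`, i.e.
`dim_k soc R ≤ dim_k m/m²`. -/
theorem type_le_edim_of_stretched {R : Type*} [CommRing R] [IsLocalRing R] [IsArtinianRing R]
    (hstretched : qlen ((maximalIdeal R) ^ 2) ((maximalIdeal R) ^ 3) ≤ 1)
    (hnotGor : mlen R ↥(Submodule.colon (⊥ : Ideal R) (maximalIdeal R)) ≠ 1) :
    mlen R ↥(Submodule.colon (⊥ : Ideal R) (maximalIdeal R)) ≤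
      qlen (maximalIdeal R) ((maximalIdeal R) ^ 2) := by
  classical
  by_cases hmbot : maximalIdeal R = ⊥
  · -- R is a field : socle is everything, length 1, contradicting non-Gorenstein
    exfalso
    apply hnotGor
    have hsoc_top : Submodule.colon (⊥ : Ideal R) (maximalIdeal R) = ⊤ := by
      rw [eq_top_iff]
      intro a _
      rw [Submodule.mem_colon]
      intro p hp
      rw [hmbot] at hp
      have hp0 : p = 0 := hp
      simp [hp0]
    rw [hsoc_top]
    calc mlen R ↥(⊤ : Ideal R) = mlen R R := mlen_congr Submodule.topEquiv
      _ = 1 := by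
          apply le_antisymm
          · apply mlen_le_one
            intro P
            rcases eq_or_ne P ⊤ with h | h
            · right; exact h
            · left
              have hle := IsLocalRing.le_maximalIdeal h
              rw [hmbot] at hle
              exact le_bot_iff.1 hle
          · have hp : ∀ i : Fin 1, (![⊥, ⊤] : Fin 2 → Submodule R R) i.castSucc <
                (![⊥, ⊤] : Fin 2 → Submodule R R) i.succ := by
              intro i
              fin_cases i
              simpa using bot_lt_iff_ne_bot.2 (Ne.symm Submodule.bot_ne_top)
            exact length_le_mlen (⟨1, ![⊥, ⊤], hp⟩ : LTSeries (Submodule R R))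
  · -- socle is a proper ideal
    have hsoc_le : Submodule.colon (⊥ : Ideal R) (maximalIdeal R) ≤ maximalIdeal R := by
      apply IsLocalRing.le_maximalIdeal
      intro hcon
      apply hmbot
      rw [eq_bot_iff]
      intro p hp
      have h1 : (1 : R) ∈ Submodule.colon (⊥ : Ideal R) (maximalIdeal R) := by
        rw [hcon]; exact Submodule.mem_top
      have := Submodule.mem_colon.1 h1 p hp
      simpa using this
    by_cases hm2 : (maximalIdeal R) ^ 2 = ⊥
    · -- m² = 0 : socle = m and m/m² ≅ m
      have hle2 : maximalIdeal R ≤ Submodule.colon (⊥ : Ideal R) (maximalIdeal R) := by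
        intro a ha
        rw [Submodule.mem_colon]
        intro p hp
        have hmem : a * p ∈ (maximalIdeal R) ^ 2 := by
          rw [pow_two]; exact Ideal.mul_mem_mul ha hp
        rw [hm2] at hmem
        simpa [smul_eq_mul] using hmem
      have hsoc : Submodule.colon (⊥ : Ideal R) (maximalIdeal R) = maximalIdeal R :=
        le_antisymm hsoc_le hle2
      unfold qlen
      rw [hsoc, hm2]
      rw [show Submodule.comap (Submodule.subtype (maximalIdeal R)) (⊥ : Ideal R) =
        (⊥ : Submodule R ↥(maximalIdeal R)) from by simp]
      exact le_of_eq
        (mlen_congr ((⊥ : Submodule R ↥(maximalIdeal R)).quotEquivOfEqBot rfl)).symm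
    · -- main case : m² ≠ 0
      have hm3 : (maximalIdeal R) ^ 3 = maximalIdeal R * (maximalIdeal R) ^ 2 := by
        rw [← pow_succ']
      -- m³ < m²
      have hne23 : (maximalIdeal R) ^ 3 ≠ (maximalIdeal R) ^ 2 := by
        intro hcon
        apply hm2
        rw [← le_bot_iff]
        apply nak
        rw [bot_sup_eq, ← hm3, hcon]
      obtain ⟨xx, hx2, hx3⟩ : ∃ x ∈ (maximalIdeal R) ^ 2, x ∉ (maximalIdeal R) ^ 3 := by
        by_contra hcon
        push_neg at hcon
        exact hne23 (le_antisymm (Ideal.pow_le_pow_right (by norm_num)) hcon)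
      -- stretchedness : the subquotient m²/m³ has trivial lattice
      unfold qlen at hstretched
      have htriv := fun P => submodule_trivial_of_mlen_le_one hstretched P
      set B := Submodule.comap (Submodule.subtype ((maximalIdeal R) ^ 2))
        ((maximalIdeal R) ^ 3) with hB
      set q : (↥((maximalIdeal R) ^ 2) ⧸ B) := Submodule.Quotient.mk ⟨xx, hx2⟩ with hq
      have hq0 : q ≠ 0 := by
        intro hcon
        rw [hq, Submodule.Quotient.mk_eq_zero] at hcon
        exact hx3 (by simpa [hB] using hcon)
      have hspan_top : Submodule.span R {q} = ⊤ := by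
        rcases htriv (Submodule.span R {q}) with h | h
        · exact absurd (Submodule.span_singleton_eq_bot.1 h) hq0
        · exact h
      have hxgen : (maximalIdeal R) ^ 2 ≤ Ideal.span {xx} ⊔ (maximalIdeal R) ^ 3 := by
        intro u hu
        have hmem : Submodule.Quotient.mk (⟨u, hu⟩ : ↥((maximalIdeal R) ^ 2)) ∈
            Submodule.span R {q} := by rw [hspan_top]; exact Submodule.mem_top
        obtain ⟨c, hc⟩ := Submodule.mem_span_singleton.1 hmem
        rw [hq, ← Submodule.Quotient.mk_smul] at hc
        have hdiff := (Submodule.Quotient.eq B).1 hc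
        have humem : u - c * xx ∈ (maximalIdeal R) ^ 3 := by
          have := neg_mem hdiff
          simpa [hB, smul_eq_mul] using this
        refine Submodule.mem_sup.2 ⟨c * xx, ?_, u - c * xx, humem, by ring⟩
        exact Ideal.mem_span_singleton'.2 ⟨c, rfl⟩
      have hyz := gen_yz hm2 ⟨xx, hx2, hxgen⟩
      -- the socle and the map to m/m²
      set soc := Submodule.colon (⊥ : Ideal R) (maximalIdeal R) with hsocdef
      set φ : ↥soc →ₗ[R] (↥(maximalIdeal R) ⧸ Submodule.comap
          (Submodule.subtype (maximalIdeal R)) ((maximalIdeal R) ^ 2)) :=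
        (Submodule.comap (Submodule.subtype (maximalIdeal R))
          ((maximalIdeal R) ^ 2)).mkQ ∘ₗ Submodule.inclusion hsoc_le with hphi
      set W := soc ⊓ (maximalIdeal R) ^ 2 with hWdef
      have hKW : LinearMap.ker φ = Submodule.comap soc.subtype W := by
        ext a
        simp only [LinearMap.mem_ker, hphi, LinearMap.comp_apply, Submodule.mkQ_apply,
          Submodule.Quotient.mk_eq_zero, Submodule.mem_comap, hWdef, Submodule.mem_inf,
          Submodule.coe_subtype]
        constructor
        · intro h
          exact ⟨a.2, h⟩
        · rintro ⟨-, h⟩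
          exact h
      obtain ⟨w, hwW, hWspan⟩ := W_gen hm2 hyz W inf_le_right
      have hwsoc : w ∈ soc := (inf_le_left : W ≤ soc) hwW
      have hann : ∀ a ∈ maximalIdeal R, a * w = 0 := by
        intro a ha
        have := Submodule.mem_colon.1 hwsoc a ha
        simpa [smul_eq_mul, mul_comm] using this
      have hWtriv : ∀ P : Submodule R ↥W, P = ⊥ ∨ P = ⊤ := by
        intro P
        by_cases hP : P = ⊥
        · left; exact hP
        · right
          obtain ⟨v, hvP, hv0⟩ := (Submodule.ne_bot_iff P).1 hP
          have hv2 : (v : R) ∈ Ideal.span {w} := by rw [← hWspan]; exact v.2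
          obtain ⟨t, ht⟩ := Ideal.mem_span_singleton'.1 hv2
          have htu : IsUnit t := by
            by_contra htu
            apply hv0
            have htm : t ∈ maximalIdeal R :=
              (IsLocalRing.mem_maximalIdeal t).mpr (mem_nonunits_iff.mpr htu)
            exact Subtype.ext (by rw [← ht, hann t htm]; rfl)
          rw [eq_top_iff]
          intro u _
          have hu2 : (u : R) ∈ Ideal.span {w} := by rw [← hWspan]; exact u.2
          obtain ⟨s, hs⟩ := Ideal.mem_span_singleton'.1 hu2
          have hu_eq : u = (s * ↑htu.unit⁻¹) • v := by
            apply Subtype.ext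
            rw [SetLike.val_smul, smul_eq_mul]
            calc (u : R) = s * w := hs.symm
              _ = s * ((↑htu.unit⁻¹ * t) * w) := by rw [IsUnit.val_inv_mul, one_mul]
              _ = (s * ↑htu.unit⁻¹) * (t * w) := by ring
              _ = (s * ↑htu.unit⁻¹) * (v : R) := by rw [ht]
          rw [hu_eq]
          exact Submodule.smul_mem P _ hvP
      have hlenK : mlen R ↥(LinearMap.ker φ) ≤ 1 := by
        rw [hKW, mlen_congr (Submodule.comapSubtypeEquivOfLe (inf_le_left : W ≤ soc))]
        exact mlen_le_one hWtriv
      -- the image of the socle in m/m² is proper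
      have hV : LinearMap.range φ ≠ ⊤ := by
        intro hcon
        have hsur := LinearMap.range_eq_top.1 hcon
        have hmle : maximalIdeal R ≤ soc ⊔ (maximalIdeal R) ^ 2 := by
          intro u hu
          obtain ⟨a, ha⟩ := hsur (Submodule.Quotient.mk ⟨u, hu⟩)
          have hdiff : Submodule.inclusion hsoc_le a - ⟨u, hu⟩ ∈ Submodule.comap
              (Submodule.subtype (maximalIdeal R)) ((maximalIdeal R) ^ 2) :=
            (Submodule.Quotient.eq _).1 ha
          have hmem : (a : R) - u ∈ (maximalIdeal R) ^ 2 := by simpa using hdiff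
          refine Submodule.mem_sup.2 ⟨(a : R), a.2, u - (a : R), ?_, by ring⟩
          have := neg_mem hmem
          simpa using this
        have hsocmul : maximalIdeal R * soc ≤ ⊥ := by
          rw [Ideal.mul_le]
          intro r hr s hs
          have := Submodule.mem_colon.1 hs r hr
          simpa [smul_eq_mul, mul_comm] using this
        have hfin : (maximalIdeal R) ^ 2 ≤ ⊥ := by
          apply nak
          calc (maximalIdeal R) ^ 2 = maximalIdeal R * maximalIdeal R := pow_two _
            _ ≤ maximalIdeal R * (soc ⊔ (maximalIdeal R) ^ 2) := Ideal.mul_mono_right hmle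
            _ = maximalIdeal R * soc ⊔ maximalIdeal R * (maximalIdeal R) ^ 2 :=
                Ideal.mul_sup _ _ _
            _ ≤ ⊥ ⊔ maximalIdeal R * (maximalIdeal R) ^ 2 := sup_le_sup_right hsocmul _
        exact hm2 (le_bot_iff.1 hfin)
      -- conclude
      unfold qlen
      calc mlen R ↥soc
          ≤ mlen R ↥(LinearMap.ker φ) + mlen R (↥soc ⧸ LinearMap.ker φ) := mlen_le_add _
        _ = mlen R ↥(LinearMap.ker φ) + mlen R ↥(LinearMap.range φ) := by
            rw [mlen_congr (LinearMap.quotKerEquivRange φ)]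
        _ ≤ 1 + mlen R ↥(LinearMap.range φ) := add_le_add_left hlenK _
        _ = mlen R ↥(LinearMap.range φ) + 1 := add_comm _ _
        _ ≤ mlen R (↥(maximalIdeal R) ⧸ Submodule.comap
            (Submodule.subtype (maximalIdeal R)) ((maximalIdeal R) ^ 2)) :=
            mlen_add_one_le hV
end

section
/- Let (R, m, k) be an artinian local ring with dim_k m²/m³ ≤ 2. Then there exists an element v ∈ m such that vm = m². -/
open IsLocalRing

section AuxStmt12

variable (R : Type*) [CommRing R] [IsLocalRing R]

/-- The module `m²/m³`, presented exactly as in `qlen`. -/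
abbrev QM := ↥((maximalIdeal R)^2) ⧸
  Submodule.comap (Submodule.subtype ((maximalIdeal R)^2)) ((maximalIdeal R)^3)

variable {R}

/-- The class of `v * x` in `m²/m³`. -/
noncomputable def wQ (v x : R) (hv : v ∈ maximalIdeal R) (hx : x ∈ maximalIdeal R) : QM R :=
  Submodule.Quotient.mk ⟨v * x, by rw [pow_two]; exact Ideal.mul_mem_mul hv hx⟩

/-- Abbreviated form of `wQ` for subtype arguments. -/
noncomputable def wQ' (v x : ↥(maximalIdeal R)) : QM R := wQ v.1 x.1 v.2 x.2

/-- The image of the ideal `m⬝v + m³` inside `m²/m³`. -/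
noncomputable def NQ (v : R) : Submodule R (QM R) :=
  Submodule.map (Submodule.mkQ _)
    (Submodule.comap (Submodule.subtype ((maximalIdeal R)^2))
      (maximalIdeal R * Ideal.span {v} ⊔ (maximalIdeal R)^3))

/-- The set of all products `wQ' v x`. -/
def WSet (R : Type*) [CommRing R] [IsLocalRing R] : Set (QM R) :=
  {q | ∃ v : ↥(maximalIdeal R), ∃ x : ↥(maximalIdeal R), q = wQ' v x}

lemma NQ_eq_top {v : R} :
    NQ v = ⊤ ↔ (maximalIdeal R)^2 ≤ maximalIdeal R * Ideal.span {v} ⊔ (maximalIdeal R)^3 := by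
  rw [NQ, Submodule.map_mkQ_eq_top, sup_eq_right.mpr
    (Submodule.comap_mono (le_sup_right)), Submodule.comap_subtype_eq_top]

lemma wQ'_mem_NQ (v x : ↥(maximalIdeal R)) : wQ' v x ∈ NQ v.1 := by
  refine Submodule.mem_map_of_mem ?_
  simp only [Submodule.mem_comap, Submodule.subtype_apply]
  exact Submodule.mem_sup_left
    (by rw [mul_comm v.1 x.1]; exact Ideal.mul_mem_mul x.2 (Ideal.mem_span_singleton_self v.1))

lemma wQ'_symm (v x : ↥(maximalIdeal R)) : wQ' v x = wQ' x v := by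
  unfold wQ' wQ; congr 1; exact Subtype.ext (mul_comm v.1 x.1)

lemma wQ'_mem_NQ' (v x : ↥(maximalIdeal R)) : wQ' v x ∈ NQ x.1 := by
  rw [wQ'_symm]; exact wQ'_mem_NQ x v

lemma wQ'_add (v w x : ↥(maximalIdeal R)) : wQ' (v + w) x = wQ' v x + wQ' w x := by
  unfold wQ' wQ
  rw [← Submodule.Quotient.mk_add]
  congr 1
  exact Subtype.ext (add_mul v.1 w.1 x.1)

lemma smul_QM' {r : R} (hr : r ∈ maximalIdeal R) (q : QM R) : r • q = 0 := by
  obtain ⟨y, rfl⟩ := Submodule.Quotient.mk_surjective _ q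
  rw [← Submodule.Quotient.mk_smul, Submodule.Quotient.mk_eq_zero]
  simp only [Submodule.mem_comap, Submodule.subtype_apply, SetLike.val_smul, smul_eq_mul]
  have h3 : (3 : ℕ) = 2 + 1 := rfl
  rw [h3, pow_succ, mul_comm r y.1]
  exact Ideal.mul_mem_mul y.2 hr

/-- Nonzero elements of a cyclic submodule of `m²/m³` generate it. -/
lemma span_simple {q q' : QM R} (hmem : q' ∈ Submodule.span R {q}) (hne : q' ≠ 0) :
    q ∈ Submodule.span R {q'} := by
  obtain ⟨r, rfl⟩ := Submodule.mem_span_singleton.mp hmem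
  have hr : IsUnit r := by
    by_contra h
    exact hne (smul_QM' h q)
  obtain ⟨u, rfl⟩ := hr
  refine Submodule.mem_span_singleton.mpr ⟨((u⁻¹ : Rˣ) : R), ?_⟩
  rw [smul_smul, Units.inv_mul, one_smul]

/-- The products `wQ' v x` span all of `m²/m³`. -/
lemma span_WSet_top : Submodule.span R (WSet R) = ⊤ := by
  rw [eq_top_iff]
  rintro q -
  obtain ⟨⟨a, ha⟩, rfl⟩ := Submodule.Quotient.mk_surjective _ q
  have key : ∀ a : R, a ∈ maximalIdeal R * maximalIdeal R →
      ∃ ha' : a ∈ (maximalIdeal R)^2,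
        (Submodule.Quotient.mk ⟨a, ha'⟩ : QM R) ∈ Submodule.span R (WSet R) := by
    intro a ha
    induction ha using Submodule.mul_induction_on' with
    | mem_mul_mem v hv x hx =>
      refine ⟨by rw [pow_two]; exact Ideal.mul_mem_mul hv hx, ?_⟩
      exact Submodule.subset_span ⟨⟨v, hv⟩, ⟨x, hx⟩, rfl⟩
    | add x hx y hy ihx ihy =>
      obtain ⟨hx', px⟩ := ihx
      obtain ⟨hy', py⟩ := ihy
      refine ⟨add_mem hx' hy', ?_⟩
      have h : (⟨x + y, add_mem hx' hy'⟩ : ↥((maximalIdeal R)^2)) = ⟨x, hx'⟩ + ⟨y, hy'⟩ := rfl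
      rw [h, Submodule.Quotient.mk_add]
      exact add_mem px py
  obtain ⟨ha', h⟩ := key a (by rwa [← pow_two])
  convert h using 2

/-- There is no chain of length 3 in the submodule lattice of `m²/m³`. -/
lemma no_chain3 (h2 : qlen ((maximalIdeal R) ^ 2) ((maximalIdeal R) ^ 3) ≤ 2)
    {A B : Submodule R (QM R)} (hA : ⊥ < A) (hAB : A < B) (hB : B < ⊤) : False := by
  have hp : ∀ i : Fin 3, (![⊥, A, B, ⊤] : Fin 4 → Submodule R (QM R)) i.castSucc <
      ![⊥, A, B, ⊤] i.succ := by
    intro i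
    fin_cases i <;> simpa using by assumption
  set p : LTSeries (Submodule R (QM R)) := ⟨3, ![⊥, A, B, ⊤], hp⟩ with hpdef
  have h3 := Order.LTSeries.length_le_krullDim p
  have hlen : p.length = 3 := rfl
  rw [hlen] at h3
  unfold qlen mlen at h2
  set d := Order.krullDim (Submodule R (QM R)) with hd
  match d, h3 with
  | (a : ℕ∞), h3 =>
    rw [WithBot.unbotD_coe] at h2
    have ha : ((3:ℕ) : ℕ∞) ≤ a := by
      rwa [show ((3:ℕ) : WithBot ℕ∞) = ((((3:ℕ) : ℕ∞)) : WithBot ℕ∞) from rfl,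
        WithBot.coe_le_coe] at h3
    have h32 : ((3:ℕ) : ℕ∞) ≤ 2 := le_trans ha h2
    norm_num at h32

/-- Nakayama-style lemma via nilpotency of the maximal ideal. -/
lemma mul_span_eq_sq_of_le {R : Type*} [CommRing R] [IsLocalRing R] [IsArtinianRing R] {v : R}
    (hv : v ∈ maximalIdeal R)
    (h : (maximalIdeal R)^2 ≤ maximalIdeal R * Ideal.span {v} ⊔ (maximalIdeal R)^3) :
    maximalIdeal R * Ideal.span {v} = (maximalIdeal R)^2 := by
  set I := maximalIdeal R with hI
  have hle : I * Ideal.span {v} ≤ I^2 := by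
    rw [pow_two]; exact Ideal.mul_mono_right (Ideal.span_le.mpr (by simpa using hv))
  refine le_antisymm hle ?_
  have claim : ∀ n, I^2 ≤ I * Ideal.span {v} ⊔ I^(n+3) := by
    intro n
    induction n with
    | zero => simpa using h
    | succ n ih =>
      have step : I^(n+3) ≤ I * Ideal.span {v} ⊔ I^(n+1+3) := by
        have e1 : I^(n+3) = I^(n+1) * I^2 := by ring
        rw [e1]
        calc I^(n+1) * I^2 ≤ I^(n+1) * (I * Ideal.span {v} ⊔ I^(n+3)) :=
              Ideal.mul_mono_right ih
          _ = I^(n+1) * (I * Ideal.span {v}) ⊔ I^(n+1) * I^(n+3) := Ideal.mul_sup _ _ _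
          _ ≤ I * Ideal.span {v} ⊔ I^(n+1+3) := by
              apply sup_le_sup
              · rw [← mul_assoc, ← pow_succ]
                exact Ideal.mul_mono_left (Ideal.pow_le_self (Nat.succ_ne_zero _))
              · rw [← pow_add]
                exact Ideal.pow_le_pow_right (by omega)
      exact le_trans ih (sup_le le_sup_left step)
  obtain ⟨n, hn⟩ : IsNilpotent I := by
    rw [hI, ← IsLocalRing.jacobson_eq_maximalIdeal ⊥ bot_ne_top]
    exact IsArtinianRing.isNilpotent_jacobson_bot
  refine le_trans (claim n) (sup_le le_rfl ?_)
  have e : I^(n+3) = I^n * I^3 := by ring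
  rw [e, hn, zero_mul]
  exact bot_le

end AuxStmt12

/-- An artinian local ring `(R, m, k)` with `dim_k m²/m³ ≤ 2` possesses an
element `v ∈ m` with `vm = m²`. -/
theorem exists_elt_smul_eq_sq {R : Type*} [CommRing R] [IsLocalRing R] [IsArtinianRing R]
    (h2 : qlen ((maximalIdeal R) ^ 2) ((maximalIdeal R) ^ 3) ≤ 2) :
    ∃ v ∈ maximalIdeal R, maximalIdeal R * Ideal.span {v} = (maximalIdeal R) ^ 2 := by
  have main : ∃ v ∈ maximalIdeal R,
      (maximalIdeal R)^2 ≤ maximalIdeal R * Ideal.span {v} ⊔ (maximalIdeal R)^3 := by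
    by_contra hcon
    push_neg at hcon
    have hNtop : ∀ v : ↥(maximalIdeal R), NQ v.1 ≠ ⊤ :=
      fun v h => hcon v.1 v.2 (NQ_eq_top.mp h)
    -- no single product spans everything
    have h1 : ∀ v x : ↥(maximalIdeal R), Submodule.span R {wQ' v x} ≠ ⊤ := by
      intro v x h
      refine hNtop v (top_unique ?_)
      rw [← h]
      exact Submodule.span_le.mpr (Set.singleton_subset_iff.mpr (wQ'_mem_NQ v x))
    -- there is a nonzero product
    by_cases hz : ∀ v x : ↥(maximalIdeal R), wQ' v x = 0
    · have hbot : (⊤ : Submodule R (QM R)) ≤ ⊥ := by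
        rw [← span_WSet_top]
        refine Submodule.span_le.mpr ?_
        rintro q ⟨v, x, rfl⟩
        simp [hz v x]
      refine hNtop ⟨0, zero_mem _⟩ (top_unique (le_trans hbot bot_le))
    push_neg at hz
    obtain ⟨v₁, x₁, hw₁⟩ := hz
    set w₁ := wQ' v₁ x₁ with hw₁def
    -- there is a product outside span {w₁}
    by_cases hall : ∀ v x : ↥(maximalIdeal R), wQ' v x ∈ Submodule.span R {w₁}
    · refine h1 v₁ x₁ (top_unique ?_)
      rw [← span_WSet_top]
      refine Submodule.span_le.mpr ?_
      rintro q ⟨v, x, rfl⟩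
      exact hall v x
    push_neg at hall
    obtain ⟨v₂, x₂, hw₂⟩ := hall
    set w₂ := wQ' v₂ x₂ with hw₂def
    have hw₂ne : w₂ ≠ 0 := fun h => hw₂ (h ▸ zero_mem _)
    have hbot1 : (⊥ : Submodule R (QM R)) < Submodule.span R {w₁} :=
      bot_lt_iff_ne_bot.mpr (by simpa [Submodule.span_singleton_eq_bot] using hw₁)
    have hbot2 : (⊥ : Submodule R (QM R)) < Submodule.span R {w₂} :=
      bot_lt_iff_ne_bot.mpr (by simpa [Submodule.span_singleton_eq_bot] using hw₂ne)
    -- span {w₁, w₂} is everything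
    have hBtop : Submodule.span R {w₁} ⊔ Submodule.span R {w₂} = ⊤ := by
      by_contra hB
      refine no_chain3 h2 hbot1 ?_ (lt_top_iff_ne_top.mpr hB)
      refine lt_of_le_of_ne le_sup_left (fun h => hw₂ ?_)
      rw [h]
      exact le_sup_right (α := Submodule R (QM R)) (Submodule.mem_span_singleton_self w₂)
    -- the cross product z = wQ' v₂ x₁ vanishes
    have hz1 : wQ' v₂ x₁ ∈ Submodule.span R {w₁} := by
      by_contra h
      refine no_chain3 h2 hbot1 ?_ (lt_top_iff_ne_top.mpr (hNtop x₁))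
      refine lt_of_le_of_ne ?_ (fun he => h (he ▸ wQ'_mem_NQ' v₂ x₁))
      exact Submodule.span_le.mpr (Set.singleton_subset_iff.mpr (wQ'_mem_NQ' v₁ x₁))
    have hz0 : wQ' v₂ x₁ = 0 := by
      by_contra hzne
      have hznot2 : wQ' v₂ x₁ ∉ Submodule.span R {w₂} := by
        intro h
        refine hw₂ (Submodule.span_le.mpr (Set.singleton_subset_iff.mpr hz1) ?_)
        exact span_simple h hzne
      refine no_chain3 h2 hbot2 ?_ (lt_top_iff_ne_top.mpr (hNtop v₂))
      refine lt_of_le_of_ne ?_ (fun he => hznot2 (he ▸ wQ'_mem_NQ v₂ x₁))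
      exact Submodule.span_le.mpr (Set.singleton_subset_iff.mpr (wQ'_mem_NQ v₂ x₂))
    -- the cross product z' = wQ' v₁ x₂ vanishes
    have hz'2 : wQ' v₁ x₂ ∈ Submodule.span R {w₂} := by
      by_contra h
      refine no_chain3 h2 hbot2 ?_ (lt_top_iff_ne_top.mpr (hNtop x₂))
      refine lt_of_le_of_ne ?_ (fun he => h (he ▸ wQ'_mem_NQ' v₁ x₂))
      exact Submodule.span_le.mpr (Set.singleton_subset_iff.mpr (wQ'_mem_NQ' v₂ x₂))
    have hz'0 : wQ' v₁ x₂ = 0 := by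
      by_contra hzne
      have hznot1 : wQ' v₁ x₂ ∉ Submodule.span R {w₁} := by
        intro h
        refine hw₂ (Submodule.span_le.mpr (Set.singleton_subset_iff.mpr h) ?_)
        exact span_simple hz'2 hzne
      refine no_chain3 h2 hbot1 ?_ (lt_top_iff_ne_top.mpr (hNtop v₁))
      refine lt_of_le_of_ne ?_ (fun he => hznot1 (he ▸ wQ'_mem_NQ v₁ x₂))
      exact Submodule.span_le.mpr (Set.singleton_subset_iff.mpr (wQ'_mem_NQ v₁ x₁))
    -- now v₁ + v₂ works, contradiction
    have he1 : wQ' (v₁ + v₂) x₁ = w₁ := by rw [wQ'_add, hz0, add_zero]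
    have he2 : wQ' (v₁ + v₂) x₂ = w₂ := by rw [wQ'_add, hz'0, zero_add]
    refine hNtop (v₁ + v₂) (top_unique ?_)
    rw [← hBtop]
    refine sup_le ?_ ?_
    · exact Submodule.span_le.mpr (Set.singleton_subset_iff.mpr
        (he1 ▸ wQ'_mem_NQ (v₁ + v₂) x₁))
    · exact Submodule.span_le.mpr (Set.singleton_subset_iff.mpr
        (he2 ▸ wQ'_mem_NQ (v₁ + v₂) x₂))
  obtain ⟨v, hv, hle⟩ := main
  exact ⟨v, hv, mul_span_eq_sq_of_le hv hle⟩
end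

section
/- Let (R, m) be a local ring admitting an exact pair of zero-divisors (x, y). Then R/(x) is a nonfree totally reflexive R-module; in particular R is not G-regular. -/
open IsLocalRing CategoryTheory

universe u

/-- The `i`-th Ext group `Ext^i_R(M, N)` of two `R`-modules. -/
noncomputable def extGroup (R : Type u) [CommRing R] (M N : Type u)
    [AddCommGroup M] [Module R M] [AddCommGroup N] [Module R N] (i : ℕ) : ModuleCat R :=
  ((Ext R (ModuleCat.{u} R) i).obj (Opposite.op (ModuleCat.of R M))).obj (ModuleCat.of R N)

/-- A finitely generated `R`-module `M` is totally reflexive if the natural map `M → M**` is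
bijective and `Ext^i_R(M, R) = 0 = Ext^i_R(M*, R)` for all `i > 0`. -/
def IsTotallyReflexive (R : Type u) [CommRing R] (M : Type u)
    [AddCommGroup M] [Module R M] : Prop :=
  Module.Finite R M ∧
  Function.Bijective (Module.Dual.eval R M) ∧
  (∀ i : ℕ, 0 < i → Subsingleton (extGroup R M R i)) ∧
  (∀ i : ℕ, 0 < i → Subsingleton (extGroup R (Module.Dual R M) R i))

/-- A ring `R` is G-regular if every finitely generated totally reflexive `R`-module is
free. -/
def IsGRegular (R : Type u) [CommRing R] : Prop :=
  ∀ (M : Type u) (_ : AddCommGroup M) (_ : Module R M),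
    IsTotallyReflexive R M → Module.Free R M

open CategoryTheory

noncomputable def mulHom (R : Type u) [CommRing R] (a : R) :
    ModuleCat.of R R ⟶ ModuleCat.of R R :=
  ModuleCat.ofHom (LinearMap.toSpanSingleton R R a)

variable {R : Type u} [CommRing R]

lemma mulHom_apply (a r : R) : mulHom R a r = r • a := rfl

lemma mulHom_comp (a b : R) : mulHom R a ≫ mulHom R b = mulHom R (a * b) := by
  refine ModuleCat.hom_ext ?_
  show (LinearMap.toSpanSingleton R R b).comp (LinearMap.toSpanSingleton R R a)
      = LinearMap.toSpanSingleton R R (a * b)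
  refine LinearMap.ext fun r => ?_
  show (r * a) * b = r * (a * b)
  rw [mul_assoc]

lemma mulHom_zero : mulHom R 0 = 0 := by
  refine ModuleCat.hom_ext ?_
  show LinearMap.toSpanSingleton R R 0 = 0
  exact LinearMap.toSpanSingleton_zero R R

def per (x y : R) (n : ℕ) : R := if Even n then x else y

lemma per_mul (x y : R) (h : x * y = 0) (n : ℕ) : per x y (n + 1) * per x y n = 0 := by
  rcases Nat.even_or_odd n with he | ho
  · simp [per, he, Nat.even_add_one, Nat.not_even_iff_odd, he.add_one, mul_comm y x, h]
  · simp [per, Nat.not_even_iff_odd.2 ho, Nat.even_add_one, ho, h]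

omit [CommRing R] in
lemma per_add_two (x y : R) (n : ℕ) : per x y (n + 2) = per x y n := by
  simp [per, Nat.even_add_one, Nat.even_add]

noncomputable def resComplex (x y : R) (hxy : x * y = 0) : ChainComplex (ModuleCat.{u} R) ℕ :=
  ChainComplex.of (fun _ => ModuleCat.of R R) (fun n => mulHom R (per x y n))
    (fun n => by rw [mulHom_comp, per_mul x y hxy, mulHom_zero])

lemma resComplex_d (x y : R) (hxy : x * y = 0) (n : ℕ) :
    (resComplex x y hxy).d (n + 1) n = mulHom R (per x y n) :=
  ChainComplex.of_d (fun _ => ModuleCat.of R R) (fun n => mulHom R (per x y n)) n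


lemma exact_mk_mulHom (a b : R) (hab : a * b = 0)
    (h : ∀ r : R, r * b = 0 ↔ r ∈ Ideal.span {a}) :
    (ShortComplex.mk (mulHom R a) (mulHom R b)
      (by rw [mulHom_comp, hab, mulHom_zero])).Exact := by
  rw [ShortComplex.moduleCat_exact_iff]
  intro r hr
  have hr' : (show R from r) * b = 0 := by rw [← smul_eq_mul]; exact hr
  obtain ⟨c, hc⟩ := Ideal.mem_span_singleton'.1 ((h _).1 hr')
  exact ⟨c, show c • a = r from by rw [smul_eq_mul, hc]⟩

lemma mulHom_mkQ (x y : R) : mulHom R (per x y 0) ≫ ModuleCat.ofHom (Ideal.span {x} : Ideal R).mkQ = 0 := by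
  refine ModuleCat.hom_ext ?_
  show (Ideal.span {x} : Ideal R).mkQ.comp (LinearMap.toSpanSingleton R R (per x y 0)) = 0
  refine LinearMap.ext fun r => ?_
  show Submodule.Quotient.mk (r • per x y 0) = (0 : R ⧸ Ideal.span {x})
  have h0 : per x y 0 = x := by simp [per]
  rw [Submodule.Quotient.mk_eq_zero, h0, smul_eq_mul]
  exact Ideal.mul_mem_left _ r (Ideal.subset_span rfl)

lemma exact_mk_mkQ (x y : R) : (ShortComplex.mk (mulHom R (per x y 0))
    (ModuleCat.ofHom (Ideal.span {x} : Ideal R).mkQ) (mulHom_mkQ x y)).Exact := by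
  rw [ShortComplex.moduleCat_exact_iff]
  intro r hr
  have hmem : (show R from r) ∈ Ideal.span {x} := (Submodule.Quotient.mk_eq_zero _).1 hr
  obtain ⟨c, hc⟩ := Ideal.mem_span_singleton'.1 hmem
  have h0 : per x y 0 = x := by simp [per]
  exact ⟨c, show c • per x y 0 = r from by rw [h0, smul_eq_mul, hc]⟩

noncomputable def resolution (x y : R) (hxy : x * y = 0)
    (hann1 : ∀ r : R, r * x = 0 ↔ r ∈ Ideal.span {y})
    (hann2 : ∀ r : R, r * y = 0 ↔ r ∈ Ideal.span {x}) :
    ProjectiveResolution (ModuleCat.of R (R ⧸ Ideal.span {x})) where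
  complex := resComplex x y hxy
  projective n := ModuleCat.projective_of_free (Module.Basis.singleton Unit R)
  π := (ChainComplex.toSingle₀Equiv _ _).symm
    ⟨ModuleCat.ofHom (Ideal.span {x} : Ideal R).mkQ, by
      rw [resComplex_d]
      refine ModuleCat.hom_ext ?_
      show (Ideal.span {x} : Ideal R).mkQ.comp (LinearMap.toSpanSingleton R R (per x y 0)) = 0
      refine LinearMap.ext fun r => ?_
      show Submodule.Quotient.mk (r • per x y 0) = (0 : R ⧸ Ideal.span {x})
      rw [Submodule.Quotient.mk_eq_zero]
      have : per x y 0 = x := by simp [per]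
      rw [this, smul_eq_mul]
      exact Ideal.mul_mem_left _ r (Ideal.subset_span rfl)⟩
  quasiIso := ⟨fun n => by
    cases n with
    | zero =>
      rw [ChainComplex.quasiIsoAt₀_iff, ShortComplex.quasiIso_iff_of_zeros']
      rotate_left
      · rfl
      · rfl
      · rfl
      refine (ShortComplex.exact_and_epi_g_iff_of_iso
        (ShortComplex.isoMk (Iso.refl _) (Iso.refl _) (Iso.refl _)
          (by simp) (by simp) :
          ShortComplex.mk (mulHom R (per x y 0))
            (ModuleCat.ofHom (Ideal.span {x} : Ideal R).mkQ) (mulHom_mkQ x y) ≅ _)).1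
        ⟨exact_mk_mkQ x y, (ModuleCat.epi_iff_surjective _).2 (Submodule.mkQ_surjective _)⟩
    | succ n =>
      rw [quasiIsoAt_iff_exactAt']
      · rw [HomologicalComplex.exactAt_iff' _ (n + 1 + 1) (n + 1) n (by simp) (by simp)]
        have e : ShortComplex.mk (mulHom R (per x y (n + 1))) (mulHom R (per x y n))
            (by rw [mulHom_comp, per_mul x y hxy, mulHom_zero]) ≅
            (resComplex x y hxy).sc' (n + 1 + 1) (n + 1) n :=
          ShortComplex.isoMk (Iso.refl _) (Iso.refl _) (Iso.refl _)
            (by simp only [Iso.refl_hom, Category.id_comp, Category.comp_id]; exact resComplex_d x y hxy (n + 1))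
            (by simp only [Iso.refl_hom, Category.id_comp, Category.comp_id]; exact resComplex_d x y hxy n)
        refine ShortComplex.exact_of_iso e
          (exact_mk_mulHom (per x y (n + 1)) (per x y n)
            (per_mul x y hxy n) fun r => ?_)
        · rcases Nat.even_or_odd n with he | ho
          · simpa [per, he, Nat.even_add_one, Nat.not_even_iff_odd] using hann1 r
          · simpa [per, Nat.not_even_iff_odd.2 ho, Nat.even_add_one, ho] using hann2 r
      · exact ChainComplex.exactAt_succ_single_obj _ _⟩

noncomputable def homMul (R : Type u) [CommRing R] (a : R) :
    ModuleCat.of R (R →ₗ[R] R) ⟶ ModuleCat.of R (R →ₗ[R] R) :=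
  ModuleCat.ofHom ((LinearMap.toSpanSingleton R R a).lcomp R R)

lemma homMul_comp (a b : R) (h : b * a = 0) : homMul R a ≫ homMul R b = 0 := by
  refine ModuleCat.hom_ext ?_
  show (((LinearMap.toSpanSingleton R R b).lcomp R R).comp
    ((LinearMap.toSpanSingleton R R a).lcomp R R)) = 0
  refine LinearMap.ext fun φ => LinearMap.ext fun r => ?_
  show φ ((r • b) • a) = (0 : R →ₗ[R] R) r
  rw [smul_eq_mul, smul_eq_mul, mul_assoc, h, mul_zero]
  exact map_zero φ

lemma hper (x y : R) (hann1 : ∀ r : R, r * x = 0 ↔ r ∈ Ideal.span {y})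
    (hann2 : ∀ r : R, r * y = 0 ↔ r ∈ Ideal.span {x}) (n : ℕ) (r : R) :
    r * per x y (n + 1) = 0 ↔ r ∈ Ideal.span {per x y n} := by
  rcases Nat.even_or_odd n with he | ho
  · simpa [per, he, Nat.even_add_one, Nat.not_even_iff_odd] using hann2 r
  · simpa [per, Nat.not_even_iff_odd.2 ho, Nat.even_add_one, ho] using hann1 r

lemma exact_mk_homMul (x y : R) (hxy : x * y = 0)
    (hann1 : ∀ r : R, r * x = 0 ↔ r ∈ Ideal.span {y})
    (hann2 : ∀ r : R, r * y = 0 ↔ r ∈ Ideal.span {x}) (j : ℕ) :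
    (ShortComplex.mk (homMul R (per x y j)) (homMul R (per x y (j + 1)))
      (homMul_comp _ _ (per_mul x y hxy j))).Exact := by
  rw [ShortComplex.moduleCat_exact_iff]
  intro φ hφ
  set φ' : R →ₗ[R] R := φ with hφ'
  have h1 : φ' (per x y (j + 1)) = 0 := by
    have := congrArg (fun (ψ : R →ₗ[R] R) => ψ 1) hφ
    simpa [homMul] using this
  have h2 : φ' 1 * per x y (j + 1) = 0 := by
    have : φ' (per x y (j + 1) • 1) = per x y (j + 1) • φ' 1 := map_smul φ' _ 1
    rw [smul_eq_mul, mul_one] at this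
    rw [mul_comm, ← smul_eq_mul, ← this, h1]
  obtain ⟨c, hc⟩ := Ideal.mem_span_singleton'.1 ((hper x y hann1 hann2 j _).1 h2)
  refine ⟨LinearMap.toSpanSingleton R R c, ?_⟩
  show ((LinearMap.toSpanSingleton R R c).comp (LinearMap.toSpanSingleton R R (per x y j)) :
    R →ₗ[R] R) = φ'
  refine LinearMap.ext fun r => ?_
  show (r • per x y j) • c = φ' r
  have : φ' r = r • φ' 1 := by rw [← map_smul, smul_eq_mul, mul_one]
  rw [this, smul_eq_mul, smul_eq_mul, smul_eq_mul, mul_comm (r * per x y j) c, ← mul_assoc,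
    mul_comm c r, mul_assoc, hc]

lemma subsingleton_of_isZero {A : ModuleCat R} (h : Limits.IsZero A) : Subsingleton A := by
  have h0 : (𝟙 A : A ⟶ A) = 0 := h.eq_of_src _ _
  refine ⟨fun a b => ?_⟩
  have ha : a = (𝟙 A : A ⟶ A) a := rfl
  have hb : b = (𝟙 A : A ⟶ A) b := rfl
  rw [ha, hb, h0]
  show (0 : A →ₗ[R] A) a = (0 : A →ₗ[R] A) b
  simp

lemma exactK (x y : R) (hxy : x * y = 0)
    (hann1 : ∀ r : R, r * x = 0 ↔ r ∈ Ideal.span {y})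
    (hann2 : ∀ r : R, r * y = 0 ↔ r ∈ Ideal.span {x}) (j : ℕ) :
    ((resComplex x y hxy).linearYonedaObj R (ModuleCat.of R R)).ExactAt (j + 1) := by
  rw [HomologicalComplex.exactAt_iff' _ j (j + 1) (j + 1 + 1) (by simp) (by simp)]
  let i : ModuleCat.of R (R →ₗ[R] R) ≅ ModuleCat.of R (ModuleCat.of R R ⟶ ModuleCat.of R R) :=
    LinearEquiv.toModuleIso
      ({ toFun := fun f => ModuleCat.ofHom f, invFun := fun f => f.hom,
         map_add' := fun _ _ => rfl, map_smul' := fun _ _ => rfl,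
         left_inv := fun _ => rfl, right_inv := fun _ => rfl } :
        (R →ₗ[R] R) ≃ₗ[R] (ModuleCat.of R R ⟶ ModuleCat.of R R))
  have e : ShortComplex.mk (homMul R (per x y j)) (homMul R (per x y (j + 1)))
      (homMul_comp _ _ (per_mul x y hxy j)) ≅
      ((resComplex x y hxy).linearYonedaObj R (ModuleCat.of R R)).sc' j (j + 1) (j + 1 + 1) :=
    ShortComplex.isoMk i i i
      (by
        apply ModuleCat.hom_ext; apply LinearMap.ext; intro φ
        apply ModuleCat.hom_ext; apply LinearMap.ext; intro r
        simp [HomologicalComplex.sc', resComplex_d, i, homMul, mulHom]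
        rfl)
      (by
        apply ModuleCat.hom_ext; apply LinearMap.ext; intro φ
        apply ModuleCat.hom_ext; apply LinearMap.ext; intro r
        simp [HomologicalComplex.sc', resComplex_d, i, homMul, mulHom]
        rfl)
  exact ShortComplex.exact_of_iso e (exact_mk_homMul x y hxy hann1 hann2 j)

lemma isZero_ext (x y : R) (hxy : x * y = 0)
    (hann1 : ∀ r : R, r * x = 0 ↔ r ∈ Ideal.span {y})
    (hann2 : ∀ r : R, r * y = 0 ↔ r ∈ Ideal.span {x}) (j : ℕ) :
    Limits.IsZero (((Ext R (ModuleCat.{u} R) (j + 1)).obj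
      (Opposite.op (ModuleCat.of R (R ⧸ Ideal.span {x})))).obj (ModuleCat.of R R)) := by
  have hmain : Limits.IsZero
      ((((resComplex x y hxy).linearYonedaObj R (ModuleCat.of R R)).homology (j + 1))) := by
    rw [← HomologicalComplex.exactAt_iff_isZero_homology]
    exact exactK x y hxy hann1 hann2 j
  exact Limits.IsZero.of_iso hmain
    ((resolution x y hxy hann1 hann2).isoExt (j + 1) (ModuleCat.of R R))

section LinearAlgebra

variable (x y : R)

/-- multiplication by `y` from `R/(x)` to `R`. -/
noncomputable def muY (hxy : x * y = 0) : (R ⧸ Ideal.span {x}) →ₗ[R] R :=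
  Submodule.liftQ _ (LinearMap.toSpanSingleton R R y) (by
    rw [Ideal.span_le, Set.singleton_subset_iff]
    show x • y = 0
    rw [smul_eq_mul, hxy])

lemma muY_mk (hxy : x * y = 0) (r : R) :
    muY x y hxy (Submodule.Quotient.mk r) = r * y := rfl

/-- the pairing `R/(x) → (R/(x))*`. -/
noncomputable def Bmap (hxy : x * y = 0) :
    (R ⧸ Ideal.span {x}) →ₗ[R] Module.Dual R (R ⧸ Ideal.span {x}) :=
  Submodule.liftQ _ (LinearMap.toSpanSingleton R _ (muY x y hxy)) (by
    rw [Ideal.span_le, Set.singleton_subset_iff]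
    show x • muY x y hxy = 0
    refine LinearMap.ext fun m => ?_
    obtain ⟨r, rfl⟩ := Submodule.Quotient.mk_surjective _ m
    show x • muY x y hxy (Submodule.Quotient.mk r) = 0
    rw [muY_mk, smul_eq_mul, mul_comm r y, ← mul_assoc, hxy, zero_mul])

lemma Bmap_mk_mk (hxy : x * y = 0) (r s : R) :
    Bmap x y hxy (Submodule.Quotient.mk r) (Submodule.Quotient.mk s) = r * (s * y) := rfl

lemma Bmap_symm (hxy : x * y = 0) (m m' : R ⧸ Ideal.span {x}) :
    Bmap x y hxy m m' = Bmap x y hxy m' m := by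
  obtain ⟨r, rfl⟩ := Submodule.Quotient.mk_surjective _ m
  obtain ⟨s, rfl⟩ := Submodule.Quotient.mk_surjective _ m'
  rw [Bmap_mk_mk, Bmap_mk_mk]
  ring

lemma Bmap_bijective (hxy : x * y = 0)
    (hann1 : ∀ r : R, r * x = 0 ↔ r ∈ Ideal.span {y})
    (hann2 : ∀ r : R, r * y = 0 ↔ r ∈ Ideal.span {x}) :
    Function.Bijective (Bmap x y hxy) := by
  constructor
  · rw [injective_iff_map_eq_zero]
    intro m hm
    obtain ⟨r, rfl⟩ := Submodule.Quotient.mk_surjective _ m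
    have h1 : r * (1 * y) = 0 := by
      rw [← Bmap_mk_mk x y hxy r 1, hm]; rfl
    rw [one_mul] at h1
    rw [Submodule.Quotient.mk_eq_zero]
    exact (hann2 r).1 h1
  · intro f
    have h0 : Submodule.Quotient.mk x = (0 : R ⧸ Ideal.span {x}) :=
      (Submodule.Quotient.mk_eq_zero _).2 (Ideal.subset_span rfl)
    have h1 : f (Submodule.Quotient.mk 1) * x = 0 := by
      have : x • f (Submodule.Quotient.mk 1) = f (Submodule.Quotient.mk (x * 1)) := by
        rw [← map_smul]
        congr 1
      rw [mul_one] at this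
      rw [mul_comm, ← smul_eq_mul, this, h0, map_zero]
    obtain ⟨c, hc⟩ := Ideal.mem_span_singleton'.1 ((hann1 _).1 h1)
    refine ⟨Submodule.Quotient.mk c, ?_⟩
    refine LinearMap.ext fun m => ?_
    obtain ⟨s, rfl⟩ := Submodule.Quotient.mk_surjective _ m
    have hfs : f (Submodule.Quotient.mk s) = s * f (Submodule.Quotient.mk 1) := by
      rw [← smul_eq_mul, ← map_smul]
      congr 1
      rw [← Submodule.Quotient.mk_smul, smul_eq_mul, mul_one]
    rw [Bmap_mk_mk, hfs, ← hc]
    ring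

/-- `R/(x)` is self-dual, hence reflexive. -/
lemma eval_bijective (hxy : x * y = 0)
    (hann1 : ∀ r : R, r * x = 0 ↔ r ∈ Ideal.span {y})
    (hann2 : ∀ r : R, r * y = 0 ↔ r ∈ Ideal.span {x}) :
    Function.Bijective (Module.Dual.eval R (R ⧸ Ideal.span {x})) := by
  set M := R ⧸ Ideal.span {x}
  let E : M ≃ₗ[R] Module.Dual R M :=
    LinearEquiv.ofBijective (Bmap x y hxy) (Bmap_bijective x y hxy hann1 hann2)
  have key : ∀ m : M, E.dualMap (Module.Dual.eval R M m) = E m := by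
    intro m
    refine LinearMap.ext fun m' => ?_
    show (Module.Dual.eval R M m) (E m') = Bmap x y hxy m m'
    show (Bmap x y hxy m') m = _
    exact Bmap_symm x y hxy m' m
  have heval : ⇑(Module.Dual.eval R M) = ⇑E.dualMap.symm ∘ ⇑E := by
    funext m
    show Module.Dual.eval R M m = E.dualMap.symm (E m)
    rw [← key m, LinearEquiv.symm_apply_apply]
  rw [heval]
  exact E.dualMap.symm.bijective.comp E.bijective

lemma not_free_quot (hx0 : x ≠ 0) (hxtop : Ideal.span {x} ≠ ⊤) :
    ¬ Module.Free R (R ⧸ Ideal.span {x}) := by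
  intro hfree
  have : Nontrivial (R ⧸ Ideal.span {x}) :=
    Submodule.Quotient.nontrivial_iff.2 hxtop
  let b := hfree.chooseBasis
  have hne : Nonempty (Module.Free.ChooseBasisIndex R (R ⧸ Ideal.span {x})) :=
    b.index_nonempty
  obtain ⟨i⟩ := hne
  have hsmul : x • b i = 0 := by
    obtain ⟨r, hr⟩ := Submodule.Quotient.mk_surjective _ (b i)
    rw [← hr, ← Submodule.Quotient.mk_smul, smul_eq_mul, Submodule.Quotient.mk_eq_zero]
    exact Ideal.mul_mem_right r _ (Ideal.subset_span rfl)
  have hx : x = 0 := by simpa using congrArg (fun m => b.repr m i) hsmul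
  exact hx0 hx

end LinearAlgebra

/-- If a local ring `(R, m)` admits an exact pair of zero-divisors
`(x, y)` (i.e. `(0 : x) = (y)` and `(0 : y) = (x)`), then `R/(x)` is a nonfree totally
reflexive `R`-module; in particular `R` is not G-regular. -/
theorem not_gRegular_of_exact_pair {R : Type u} [CommRing R] [IsNoetherianRing R]
    [IsLocalRing R] (x y : R) (hx : x ∈ maximalIdeal R) (hy : y ∈ maximalIdeal R)
    (h1 : Submodule.colon (⊥ : Ideal R) (Ideal.span {x}) = Ideal.span {y})
    (h2 : Submodule.colon (⊥ : Ideal R) (Ideal.span {y}) = Ideal.span {x}) :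
    IsTotallyReflexive R (R ⧸ Ideal.span {x}) ∧
    ¬ Module.Free R (R ⧸ Ideal.span {x}) ∧
    ¬ IsGRegular R := by
  have hann1 : ∀ r : R, r * x = 0 ↔ r ∈ Ideal.span {y} := fun r => by
    rw [← h1, Ideal.mem_colon_span_singleton, Ideal.mem_bot]
  have hann2 : ∀ r : R, r * y = 0 ↔ r ∈ Ideal.span {x} := fun r => by
    rw [← h2, Ideal.mem_colon_span_singleton, Ideal.mem_bot]
  have hxy : x * y = 0 := (hann2 x).2 (Ideal.subset_span rfl)
  have hx0 : x ≠ 0 := by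
    intro h
    obtain ⟨c, hc⟩ := Ideal.mem_span_singleton'.1 ((hann1 1).1 (by rw [h, mul_zero]))
    exact (mem_maximalIdeal y).1 hy (IsUnit.of_mul_eq_one (a := y) c (by rw [mul_comm, hc]))
  have hxtop : Ideal.span {x} ≠ ⊤ := by
    intro h
    obtain ⟨c, hc⟩ := Ideal.mem_span_singleton'.1 (h ▸ (Submodule.mem_top : (1:R) ∈ ⊤))
    exact (mem_maximalIdeal x).1 hx (IsUnit.of_mul_eq_one (a := x) c (by rw [mul_comm, hc]))
  have hfin : Module.Finite R (R ⧸ Ideal.span {x}) :=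
    Module.Finite.of_surjective (Ideal.span {x} : Ideal R).mkQ
      (Submodule.mkQ_surjective _)
  have hext1 : ∀ i : ℕ, 0 < i → Subsingleton (extGroup R (R ⧸ Ideal.span {x}) R i) := by
    intro i hi
    match i, hi with
    | (j+1), _ =>
      exact subsingleton_of_isZero (isZero_ext x y hxy hann1 hann2 j)
  have hext2 : ∀ i : ℕ, 0 < i →
      Subsingleton (extGroup R (Module.Dual R (R ⧸ Ideal.span {x})) R i) := by
    intro i hi
    match i, hi with
    | (j+1), _ =>
      have E : (R ⧸ Ideal.span {x}) ≃ₗ[R] Module.Dual R (R ⧸ Ideal.span {x}) :=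
        LinearEquiv.ofBijective (Bmap x y hxy) (Bmap_bijective x y hxy hann1 hann2)
      have iso := ((Ext R (ModuleCat.{u} R) (j+1)).mapIso E.toModuleIso.op).app
        (ModuleCat.of R R)
      exact subsingleton_of_isZero
        (Limits.IsZero.of_iso (isZero_ext x y hxy hann1 hann2 j) iso)
  have htr : IsTotallyReflexive R (R ⧸ Ideal.span {x}) :=
    ⟨hfin, eval_bijective x y hxy hann1 hann2, hext1, hext2⟩
  have hnf : ¬ Module.Free R (R ⧸ Ideal.span {x}) := not_free_quot x hx0 hxtop
  exact ⟨htr, hnf, fun h => hnf (h _ _ _ htr)⟩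
end

section
/- Let R be a Cohen–Macaulay local ring of dimension d ≥ 0 with infinite residue field and multiplicity e(R) ≤ codim R + 2, where codim R = edim R − d. Then for a system of parameters x₁,...,x_d generating a minimal reduction of the maximal ideal m, the quotient ring R̄ = R/(x₁,...,x_d) satisfies m̄³ = 0, where m̄ is the maximal ideal of R̄. -/
open IsLocalRing

section Helpers

open Submodule Module

lemma le_unbot'_of_le {x : WithBot ℕ∞} {n : ℕ∞} (h : (n : WithBot ℕ∞) ≤ x) :
    n ≤ WithBot.unbotD 0 x := by
  cases x with
  | bot => simp at h
  | coe a => rw [WithBot.unbotD_coe]; exact_mod_cast h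

lemma unbot'_le_of_le {x : WithBot ℕ∞} {n : ℕ∞} (h : x ≤ (n : WithBot ℕ∞)) :
    WithBot.unbotD 0 x ≤ n := by
  cases x with
  | bot => simp
  | coe a => rw [WithBot.unbotD_coe]; exact_mod_cast h

variable (K V : Type*) [DivisionRing K] [AddCommGroup V] [Module K V] [FiniteDimensional K V]

lemma ltSeries_length_le_finrank (p : LTSeries (Submodule K V)) :
    p.length ≤ finrank K V := by
  have key : ∀ i : ℕ, ∀ h : i ≤ p.length, i ≤ finrank K (p ⟨i, Nat.lt_succ_of_le h⟩) := by
    intro i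
    induction i with
    | zero => intro _; exact Nat.zero_le _
    | succ j ih =>
      intro h
      have hj : j ≤ p.length := le_of_lt h
      have hlt : p ⟨j, Nat.lt_succ_of_le hj⟩ < p ⟨j + 1, Nat.lt_succ_of_le h⟩ := by
        apply p.strictMono
        exact Fin.mk_lt_mk.mpr (by omega)
      have h2 := Submodule.finrank_lt_finrank_of_lt hlt
      have h3 := ih hj
      omega
  have h1 := key p.length le_rfl
  exact h1.trans (Submodule.finrank_le _)

lemma exists_ltSeries_finrank :
    ∃ p : LTSeries (Submodule K V), p.head = ⊥ ∧ p.last = ⊤ ∧ p.length = finrank K V := by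
  classical
  set n := finrank K V with hn
  let b : Basis (Fin n) K V := finBasis K V
  refine ⟨⟨n, fun i => Submodule.span K (b '' {j | (j : ℕ) < (i : ℕ)}), ?_⟩, ?_, ?_, rfl⟩
  · intro i
    constructor
    · apply Submodule.span_mono
      apply Set.image_mono
      intro j hj
      simp only [Set.mem_setOf_eq, Fin.coe_castSucc, Fin.val_succ] at hj ⊢
      omega
    · intro hle
      have hmem : b i ∈ Submodule.span K (b '' {j | (j : ℕ) < ((i.succ : Fin (n+1)) : ℕ)}) := by
        apply Submodule.subset_span
        exact ⟨i, by simp, rfl⟩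
      have := hle hmem
      exact b.linearIndependent.notMem_span_image (by simp) this
  · show Submodule.span K (b '' {j | (j:ℕ) < ((0 : Fin (n+1)) : ℕ)}) = ⊥
    convert Submodule.span_empty
    simp
  · show Submodule.span K (b '' {j | (j:ℕ) < ((Fin.last n : Fin (n+1)) : ℕ)}) = ⊤
    have h4 : {j : Fin n | (j:ℕ) < ((Fin.last n : Fin (n+1)) : ℕ)} = Set.univ := by
      ext j; simp [Fin.val_last, j.2]
    rw [h4, Set.image_univ, b.span_eq]

/-- The submodule lattices agree for two compatible scalar actions related by a
surjective ring homomorphism. -/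
def surjSubOrderIso {R S M : Type*} [CommRing R] [CommRing S] [AddCommGroup M]
    [Module R M] [Module S M] (f : R →+* S) (hf : Function.Surjective f)
    (hcomp : ∀ (r : R) (x : M), f r • x = r • x) :
    Submodule S M ≃o Submodule R M where
  toFun N :=
    { carrier := N
      add_mem' := fun ha hb => N.add_mem ha hb
      zero_mem' := N.zero_mem
      smul_mem' := fun r x hx => by
        rw [show r • x = f r • x from (hcomp r x).symm]
        exact N.smul_mem _ hx }
  invFun N :=
    { carrier := N
      add_mem' := fun ha hb => N.add_mem ha hb
      zero_mem' := N.zero_mem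
      smul_mem' := fun c x hx => by
        obtain ⟨r, rfl⟩ := hf c
        rw [hcomp]
        exact N.smul_mem r hx }
  left_inv N := by ext x; rfl
  right_inv N := by ext x; rfl
  map_rel_iff' := Iff.rfl

@[simp] lemma mem_surjSubOrderIso {R S M : Type*} [CommRing R] [CommRing S] [AddCommGroup M]
    [Module R M] [Module S M] (f : R →+* S) (hf : Function.Surjective f)
    (hcomp : ∀ (r : R) (x : M), f r • x = r • x) (N : Submodule S M) (x : M) :
    x ∈ surjSubOrderIso f hf hcomp N ↔ x ∈ N := Iff.rfl

end Helpers

/-- Let `(R, m)` be a Cohen–Macaulay local ring of dimension `d` with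
infinite residue field (Cohen–Macaulayness is witnessed by a system of parameters
`l = x₁, …, x_d` that is a regular sequence) and suppose `l` generates a minimal reduction
of `m` and `e(R) = ℓ(R/(l)) ≤ codim R + 2`, i.e. `ℓ(R/(l)) + d ≤ edim R + 2`. Then the
maximal ideal of `R/(l)` cubes to zero, i.e. `m³ ⊆ (l)`. -/
theorem cube_vanishes_of_small_multiplicity {R : Type*} [CommRing R] [IsNoetherianRing R]
    [IsLocalRing R] [Infinite (ResidueField R)] (d : ℕ) (hd : ringKrullDim R = d)
    (l : List R) (hlen : l.length = d)
    (hregseq : RingTheory.Sequence.IsRegular R l)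
    (hsop : IsArtinianRing (R ⧸ Ideal.span {a | a ∈ l}))
    (hred : ∃ c : ℕ, (maximalIdeal R) ^ (c + 1) =
      Ideal.span {a | a ∈ l} * (maximalIdeal R) ^ c)
    (hminred : ∀ J : Ideal R, J ≤ Ideal.span {a | a ∈ l} →
      (∃ c : ℕ, (maximalIdeal R) ^ (c + 1) = J * (maximalIdeal R) ^ c) →
      J = Ideal.span {a | a ∈ l})
    (hmult : mlen R (R ⧸ Ideal.span {a | a ∈ l}) + (d : ℕ∞) ≤
      qlen (maximalIdeal R) ((maximalIdeal R) ^ 2) + 2) :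
    (maximalIdeal R) ^ 3 ≤ Ideal.span {a | a ∈ l} := by
  classical
  set m : Ideal R := maximalIdeal R with hmdef
  set L : Ideal R := Ideal.span {a | a ∈ l} with hLdef
  by_contra hm3
  have hmTop : m ≠ ⊤ := (maximalIdeal.isMaximal R).ne_top
  -- L is a proper ideal, hence contained in m
  have hLm : L ≤ m := by
    by_contra hc
    have hLtop : L = ⊤ := by
      by_contra h2
      exact hc (IsLocalRing.le_maximalIdeal h2)
    have hm_eq : m = L := hminred m (by rw [hLtop]; exact le_top)
      ⟨0, by rw [pow_zero, pow_one, mul_one]⟩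
    exact hmTop (hm_eq.trans hLtop)
  -- some power of m is contained in L
  obtain ⟨c, hcEq⟩ := hred
  have hNL : m ^ (c + 1) ≤ L := by rw [hcEq]; exact Ideal.mul_le_left
  -- key Nakayama-style lemma
  have key : ∀ a : ℕ, m ^ a ≤ m ^ (a + 1) ⊔ L → m ^ a ≤ L := by
    intro a ha
    have step : ∀ j : ℕ, m ^ a ≤ m ^ (a + j) ⊔ L := by
      intro j
      induction j with
      | zero => simp only [Nat.add_zero]; exact le_sup_left
      | succ j ih =>
        refine ih.trans (sup_le ?_ le_sup_right)
        calc m ^ (a + j) = m ^ j * m ^ a := by rw [← pow_add]; ring_nf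
          _ ≤ m ^ j * (m ^ (a + 1) ⊔ L) := Ideal.mul_mono_right ha
          _ = m ^ j * m ^ (a + 1) ⊔ m ^ j * L := Ideal.mul_sup _ _ _
          _ ≤ m ^ (a + (j + 1)) ⊔ L :=
            sup_le_sup (le_of_eq (by rw [← pow_add]; ring_nf)) Ideal.mul_le_right
    have := step (c + 1)
    refine this.trans (sup_le ?_ le_rfl)
    exact (Ideal.pow_le_pow_right (by omega)).trans hNL
  have hm2L : ¬ m ^ 2 ≤ L := fun h => hm3 ((Ideal.pow_le_pow_right (by omega)).trans h)
  -- strict inclusions at the bottom of the chain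
  have s0 : L < m ^ 3 ⊔ L :=
    lt_of_le_of_ne le_sup_right (fun h => hm3 (le_sup_left.trans h.symm.le))
  have s1 : m ^ 3 ⊔ L < m ^ 2 ⊔ L := by
    refine lt_of_le_of_ne (sup_le_sup_right (Ideal.pow_le_pow_right (by omega)) L) fun h => ?_
    exact hm2L (key 2 (le_sup_left.trans h.symm.le))
  have s2 : m ^ 2 ⊔ L ≤ m := sup_le (Ideal.pow_le_self two_ne_zero) hLm
  -- the module m/m², with its residue field structure
  set U' : Submodule R ↥m := Submodule.comap (Submodule.subtype m) (m ^ 2) with hU'def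
  have tors : Module.IsTorsionBySet R (↥m ⧸ U') (m : Set R) := by
    rintro x ⟨r, hr⟩
    obtain ⟨y, rfl⟩ := Submodule.mkQ_surjective U' x
    rw [← map_smul, Submodule.mkQ_apply, Submodule.Quotient.mk_eq_zero]
    show ((r • y : ↥m) : R) ∈ m ^ 2
    rw [Submodule.coe_smul, smul_eq_mul, pow_two]
    exact Ideal.mul_mem_mul hr y.2
  letI kMod : Module (ResidueField R) (↥m ⧸ U') := tors.module
  have hcomp : ∀ (r : R) (x : ↥m ⧸ U'), IsLocalRing.residue R r • x = r • x :=
    fun r x => tors.mk_smul r x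
  let e : Submodule (ResidueField R) (↥m ⧸ U') ≃o Submodule R (↥m ⧸ U') :=
    surjSubOrderIso (IsLocalRing.residue R) (IsLocalRing.residue_surjective) hcomp
  -- finiteness
  haveI : Module.Finite R ↥m := Module.Finite.iff_fg.mpr (IsNoetherian.noetherian m)
  haveI : Module.Finite R (↥m ⧸ U') := Module.Finite.quotient R U'
  obtain ⟨s, hs⟩ := Module.Finite.fg_top (R := R) (M := ↥m ⧸ U')
  haveI kFin : Module.Finite (ResidueField R) (↥m ⧸ U') := by
    refine ⟨⟨s, ?_⟩⟩
    have h1 : Submodule.span R (s : Set (↥m ⧸ U')) ≤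
        e (Submodule.span (ResidueField R) (s : Set (↥m ⧸ U'))) :=
      Submodule.span_le.mpr (fun x hx => Submodule.subset_span hx)
    have h2 : e (Submodule.span (ResidueField R) (s : Set (↥m ⧸ U'))) = ⊤ :=
      top_le_iff.mp (hs ▸ h1)
    have h3 : e ⊤ = ⊤ := e.map_top
    exact e.injective (h2.trans h3.symm)
  -- the submodule corresponding to the reduction
  set U : Submodule R ↥m := Submodule.comap (Submodule.subtype m) (m ^ 2 ⊔ L) with hUdef
  have hU'U : U' ≤ U := Submodule.comap_mono le_sup_left
  set W : Submodule R (↥m ⧸ U') := Submodule.map U'.mkQ U with hWdef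
  set Wk : Submodule (ResidueField R) (↥m ⧸ U') := e.symm W with hWkdef
  -- Wk is spanned by the images of the elements of l
  have hxm : ∀ x ∈ l, x ∈ m := fun x hx => hLm (Submodule.subset_span hx)
  let f : Fin l.length → (↥m ⧸ U') := fun i => U'.mkQ ⟨l.get i, hxm _ (List.get_mem l i)⟩
  have claim : ∀ w, ∀ hw : w ∈ L,
      U'.mkQ ⟨w, hLm hw⟩ ∈ Submodule.span (ResidueField R) (Set.range f) := by
    intro w hw
    induction hw using Submodule.span_induction with
    | mem x hx =>
      obtain ⟨i, hi⟩ := List.get_of_mem hx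
      have hfi : f i = U'.mkQ ⟨x, hxm x hx⟩ := by
        show U'.mkQ _ = U'.mkQ _
        congr 1
        exact Subtype.ext hi
      rw [← hfi]
      exact Submodule.subset_span (Set.mem_range_self i)
    | zero =>
      have h0 : (⟨0, hLm (Submodule.zero_mem L)⟩ : ↥m) = 0 := rfl
      rw [h0, map_zero]
      exact Submodule.zero_mem _
    | add x y hx hy ihx ihy =>
      have hadd : (⟨x + y, hLm (Submodule.add_mem L hx hy)⟩ : ↥m) =
          ⟨x, hLm hx⟩ + ⟨y, hLm hy⟩ := rfl
      rw [hadd, map_add]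
      exact Submodule.add_mem _ ihx ihy
    | smul r x hx ih =>
      have hsmul : (⟨r • x, hLm (Submodule.smul_mem L r hx)⟩ : ↥m) = r • ⟨x, hLm hx⟩ := rfl
      rw [hsmul, map_smul, ← hcomp]
      exact Submodule.smul_mem _ _ ih
  have hWk_le : Wk ≤ Submodule.span (ResidueField R) (Set.range f) := by
    rw [hWkdef, OrderIso.symm_apply_le]
    rw [hWdef, Submodule.map_le_iff_le_comap]
    rintro u hu
    have hu' : (u : R) ∈ m ^ 2 ⊔ L := hu
    obtain ⟨v, hv, w, hw, huv⟩ := Submodule.mem_sup.mp hu'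
    have hquot : U'.mkQ u = U'.mkQ ⟨w, hLm hw⟩ := by
      rw [Submodule.mkQ_apply, Submodule.mkQ_apply, Submodule.Quotient.eq]
      show ((u - ⟨w, hLm hw⟩ : ↥m) : R) ∈ m ^ 2
      have : ((u - ⟨w, hLm hw⟩ : ↥m) : R) = v := by
        push_cast
        rw [← huv]; ring
      rw [this]; exact hv
    show U'.mkQ u ∈ e (Submodule.span (ResidueField R) (Set.range f))
    rw [hquot]
    exact claim w hw
  have hWk_fr : Module.finrank (ResidueField R) ↥Wk ≤ l.length := by
    calc Module.finrank (ResidueField R) ↥Wk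
        ≤ Module.finrank (ResidueField R) ↥(Submodule.span (ResidueField R) (Set.range f)) :=
          Submodule.finrank_mono hWk_le
      _ ≤ Fintype.card (Fin l.length) := finrank_range_le_card f
      _ = l.length := by simp
  -- the quotient space
  have hrank : Module.finrank (ResidueField R) ((↥m ⧸ U') ⧸ Wk) +
      Module.finrank (ResidueField R) ↥Wk = Module.finrank (ResidueField R) (↥m ⧸ U') :=
    Submodule.finrank_quotient_add_finrank Wk
  obtain ⟨cQ, hQhead, hQlast, hQlen⟩ :=
    exists_ltSeries_finrank (ResidueField R) ((↥m ⧸ U') ⧸ Wk)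
  -- the map from subspaces of the quotient to ideals of R
  let g : Submodule (ResidueField R) ((↥m ⧸ U') ⧸ Wk) → Ideal R := fun N =>
    Submodule.map (Submodule.subtype m) (Submodule.comap U'.mkQ (e (Submodule.comap Wk.mkQ N)))
  have gstrict : StrictMono g := by
    intro N N' h
    exact Submodule.map_strictMono_of_injective (Submodule.injective_subtype m)
      (Submodule.comap_strictMono_of_surjective (Submodule.mkQ_surjective U')
        (e.strictMono (Submodule.comap_strictMono_of_surjective (Submodule.mkQ_surjective Wk) h)))
  have hg_bot : g ⊥ = m ^ 2 ⊔ L := by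
    show Submodule.map _ (Submodule.comap _ (e (Submodule.comap Wk.mkQ ⊥))) = _
    rw [Submodule.comap_bot, Submodule.ker_mkQ, hWkdef, OrderIso.apply_symm_apply, hWdef,
      Submodule.comap_map_mkQ, sup_eq_right.mpr hU'U, hUdef, Submodule.map_comap_subtype]
    exact inf_eq_right.mpr s2
  have hg_top : g ⊤ = m := by
    show Submodule.map _ (Submodule.comap _ (e (Submodule.comap Wk.mkQ ⊤))) = _
    rw [Submodule.comap_top, e.map_top, Submodule.comap_top, Submodule.map_subtype_top]
  have hLg : ∀ N, L ≤ g N := by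
    intro N
    have h1 : g ⊥ ≤ g N := gstrict.monotone bot_le
    rw [hg_bot] at h1
    exact le_trans le_sup_right h1
  -- assemble the chain
  let gt : Submodule (ResidueField R) ((↥m ⧸ U') ⧸ Wk) → {J : Ideal R // L ≤ J} :=
    fun N => ⟨g N, hLg N⟩
  have gtstrict : StrictMono gt := fun N N' h => Subtype.mk_lt_mk.mpr (gstrict h)
  let c2 := cQ.map gt gtstrict
  have hc2head : c2.head = ⟨m ^ 2 ⊔ L, le_sup_right⟩ := by
    rw [LTSeries.head_map, hQhead]
    exact Subtype.ext hg_bot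
  have hc2last : c2.last = ⟨m, hLm⟩ := by
    rw [LTSeries.last_map, hQlast]
    exact Subtype.ext hg_top
  let c3 := c2.cons ⟨m ^ 3 ⊔ L, le_sup_right⟩ (by rw [hc2head]; show (_ : {J : Ideal R // L ≤ J}) < _; exact Subtype.mk_lt_mk.mpr s1)
  let c4 := c3.cons ⟨L, le_rfl⟩ (by
    rw [RelSeries.head_cons]
    show (_ : {J : Ideal R // L ≤ J}) < _
    exact Subtype.mk_lt_mk.mpr s0)
  let c5 := c4.snoc ⟨⊤, le_top⟩ (by
    have h4 : c4.last = c2.last := by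
      show (c3.cons _ _).last = _
      rw [RelSeries.last_cons]
      show (c2.cons _ _).last = _
      rw [RelSeries.last_cons]
    rw [h4, hc2last]
    show (_ : {J : Ideal R // L ≤ J}) < _
    exact Subtype.mk_lt_mk.mpr (lt_top_iff_ne_top.mpr hmTop))
  let ψ : {J : Ideal R // L ≤ J} ≃o Submodule R (R ⧸ L) := (Submodule.comapMkQRelIso L).symm
  let c6 := LTSeries.map c5 ψ ψ.strictMono
  have hc6len : c6.length = Module.finrank (ResidueField R) ((↥m ⧸ U') ⧸ Wk) + 3 := by
    simp only [c6, c5, c4, c3, c2, LTSeries.map_length, RelSeries.snoc_length,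
      RelSeries.cons_length, RelSeries.append_length, RelSeries.singleton_length, hQlen]
  -- lower bound for mlen of R/L
  have h2 : ((Module.finrank (ResidueField R) ((↥m ⧸ U') ⧸ Wk) + 3 : ℕ) : ℕ∞) ≤
      mlen R (R ⧸ L) := by
    have h5 := Order.LTSeries.length_le_krullDim c6
    rw [hc6len] at h5
    exact le_unbot'_of_le (by exact_mod_cast h5)
  -- upper bound for qlen
  have h1 : qlen m (m ^ 2) ≤ ((Module.finrank (ResidueField R) (↥m ⧸ U') : ℕ) : ℕ∞) := by
    show WithBot.unbotD 0 (Order.krullDim (Submodule R (↥m ⧸ U'))) ≤ _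
    apply unbot'_le_of_le
    rw [← Order.krullDim_eq_of_orderIso e]
    rw [Order.krullDim_eq_iSup_length, WithBot.coe_le_coe]
    apply iSup_le
    intro p
    have h6 := ltSeries_length_le_finrank (ResidueField R) (↥m ⧸ U') p
    exact_mod_cast h6
  -- final arithmetic
  have hfinal : ((Module.finrank (ResidueField R) ((↥m ⧸ U') ⧸ Wk) + 3 : ℕ) : ℕ∞) + (d : ℕ∞) ≤
      ((Module.finrank (ResidueField R) (↥m ⧸ U') : ℕ) : ℕ∞) + 2 :=
    calc ((Module.finrank (ResidueField R) ((↥m ⧸ U') ⧸ Wk) + 3 : ℕ) : ℕ∞) + (d : ℕ∞)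
        ≤ mlen R (R ⧸ L) + (d : ℕ∞) := add_le_add_left h2 _
      _ ≤ qlen m (m ^ 2) + 2 := hmult
      _ ≤ ((Module.finrank (ResidueField R) (↥m ⧸ U') : ℕ) : ℕ∞) + 2 := add_le_add_left h1 _
  have hfinalN : (Module.finrank (ResidueField R) ((↥m ⧸ U') ⧸ Wk) + 3) + d ≤
      Module.finrank (ResidueField R) (↥m ⧸ U') + 2 := by exact_mod_cast hfinal
  have hWd : Module.finrank (ResidueField R) ↥Wk ≤ d := hlen ▸ hWk_fr
  omega
end

section
/- Let S be a local ring, U a subset of S such that the difference of any two distinct elements of U is a unit, a, b ∈ S with a a non-zerodivisor, and p₁,...,p_n the associated primes of S. Then for any x ∈ S, the set {u ∈ U : a − bux ∈ p₁ ∪ ... ∪ p_n} has at most n elements. -/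
/-- A nonzerodivisor does not lie in any associated prime. -/
lemma nzd_not_mem_assoc {S : Type*} [CommRing S] (a : S) (ha : a ∈ nonZeroDivisors S)
    (p : Ideal S) (hp : p ∈ associatedPrimes S S) : a ∉ p := by
  obtain ⟨hprime, m, rfl⟩ := hp
  intro hmem
  obtain ⟨n, hn⟩ := hmem
  rw [Submodule.mem_colon_singleton, Submodule.mem_bot] at hn
  have hm0 : m = 0 := (pow_mem ha n).2 m (by rwa [smul_eq_mul, mul_comm] at hn)
  subst hm0
  exact hprime.ne_top (by
    rw [Ideal.eq_top_iff_one]; exact ⟨1, by simp [Submodule.mem_colon_singleton]⟩)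

/-- Let `S` be a Noetherian local ring, `U ⊆ S` a set such that the
difference of any two distinct elements of `U` is a unit, `a, b ∈ S` with `a` a
non-zerodivisor, and let `ps` be the (finite) set of associated primes of `S`. Then for any
`x ∈ S`, the set of `u ∈ U` with `a − bux` lying in some associated prime has at most
`ps.card` elements. -/
theorem card_bad_parameters_le {S : Type*} [CommRing S] [IsNoetherianRing S] [IsLocalRing S]
    (U : Set S) (hU : ∀ u ∈ U, ∀ v ∈ U, u ≠ v → IsUnit (u - v))
    (a b : S) (ha : a ∈ nonZeroDivisors S)
    (ps : Finset (Ideal S)) (hps : ∀ p : Ideal S, p ∈ ps ↔ p ∈ associatedPrimes S S)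
    (x : S) :
    {u ∈ U | ∃ p ∈ ps, a - b * u * x ∈ p}.Finite ∧
    {u ∈ U | ∃ p ∈ ps, a - b * u * x ∈ p}.ncard ≤ ps.card := by
  set T := {u ∈ U | ∃ p ∈ ps, a - b * u * x ∈ p} with hT
  -- choice function
  have hex : ∀ u ∈ T, ∃ p ∈ ps, a - b * u * x ∈ p := fun u hu => hu.2
  classical
  choose f hfps hfmem using hex
  -- injectivity on T
  have hinj : ∀ u (hu : u ∈ T) v (hv : v ∈ T), f u hu = f v hv → u = v := by
    intro u hu v hv hfe
    by_contra hne
    set p := f u hu with hp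
    have hpps : p ∈ ps := hfps u hu
    have hpassoc : p ∈ associatedPrimes S S := (hps p).mp hpps
    have hprime : p.IsPrime := hpassoc.isPrime
    have h1 : a - b * u * x ∈ p := hfmem u hu
    have h2 : a - b * v * x ∈ p := hfe ▸ hfmem v hv
    have hdiff : b * (u - v) * x ∈ p := by
      have := p.sub_mem h2 h1
      have he : (a - b * v * x) - (a - b * u * x) = b * (u - v) * x := by ring
      rwa [he] at this
    have hunit : IsUnit (u - v) := hU u hu.1 v hv.1 hne
    have hbx : b * x ∈ p := by
      have : b * ((u - v) * x) ∈ p := by rwa [← mul_assoc]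
      rcases hprime.mem_or_mem this with h | h
      · exact Ideal.mul_mem_right _ _ h
      rcases hprime.mem_or_mem h with h' | h'
      · exact absurd h' (fun h'' => hprime.ne_top (p.eq_top_of_isUnit_mem h'' hunit))
      · exact Ideal.mul_mem_left _ _ h'
    have hamem : a ∈ p := by
      have : a - b * u * x + u * (b * x) ∈ p :=
        p.add_mem h1 (Ideal.mul_mem_left _ _ hbx)
      have he : a - b * u * x + u * (b * x) = a := by ring
      rwa [he] at this
    exact nzd_not_mem_assoc a ha p hpassoc hamem
  classical
  let g : S → Ideal S := fun u => if h : u ∈ T then f u h else ⊥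
  have hgmem : ∀ u ∈ T, g u ∈ (ps : Set (Ideal S)) := by
    intro u hu; simp only [g, dif_pos hu]; exact hfps u hu
  have hginj : Set.InjOn g T := by
    intro u hu v hv h
    simp only [g, dif_pos hu, dif_pos hv] at h
    exact hinj u hu v hv h
  have himg : g '' T ⊆ (ps : Set (Ideal S)) := by
    rintro _ ⟨u, hu, rfl⟩; exact hgmem u hu
  have hfin : T.Finite := Set.Finite.of_finite_image (ps.finite_toSet.subset himg) hginj
  refine ⟨hfin, ?_⟩
  calc T.ncard = (g '' T).ncard := (Set.ncard_image_of_injOn hginj).symm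
    _ ≤ (ps : Set (Ideal S)).ncard := Set.ncard_le_ncard himg ps.finite_toSet
    _ = ps.card := by simp [Set.ncard_coe_finset]
end
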